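/- arXiv:math/0508107 — 7 statements merged into one kernel-verified Lean document; each statement's English description precedes it below -/
import Mathlib

section
/- If m_i^{(a)} = 0 for some i ≥ 1, then the vacancy numbers satisfy the convexity inequality p_i^{(a)} ≥ (p_{i−1}^{(a)} + p_{i+1}^{(a)})/2, i.e., 2 p_i^{(a)} ≥ p_{i−1}^{(a)} + p_{i+1}^{(a)}. -/
/-- Cartan pairing `(α_a | α_b)` of type `A_{n-1}`. -/
def cartanA (a b : ℕ) : ℤ :=
  if a = b then 2 else if a + 1 = b ∨ b + 1 = a then -1 else 0

/-- The vacancy number `p_i^{(a)}`. -/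
def vacN (n N : ℕ) (L m : ℕ → ℕ → ℕ) (a i : ℕ) : ℤ :=
  (∑ j ∈ Finset.range (N + 1), ((min i j : ℕ) : ℤ) * (L a j : ℤ)) -
    ∑ b ∈ Finset.range (n + 1), ∑ j ∈ Finset.range (N + 1),
      cartanA a b * ((min i j : ℕ) : ℤ) * (m b j : ℤ)

/-- if `m_i^{(a)} = 0` then the vacancy numbers are convex at `i`:
`2 p_i^{(a)} ≥ p_{i-1}^{(a)} + p_{i+1}^{(a)}`. -/
theorem vacancy_convexity
    (n N : ℕ) (hn : 2 ≤ n) (L m : ℕ → ℕ → ℕ)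
    (hm0 : ∀ i, m 0 i = 0) (hmn : ∀ i, m n i = 0)
    (hLsupp : ∀ a j, N < j → L a j = 0)
    (hmsupp : ∀ a j, N < j → m a j = 0)
    (a i : ℕ) (ha1 : 1 ≤ a) (ha2 : a ≤ n - 1) (hi : 1 ≤ i)
    (hmi : m a i = 0) :
    vacN n N L m a (i - 1) + vacN n N L m a (i + 1) ≤ 2 * vacN n N L m a i := by
  have hmin : ∀ j : ℕ, 2 * ((min i j : ℕ) : ℤ)
      = ((min (i-1) j : ℕ) : ℤ) + ((min (i+1) j : ℕ) : ℤ) + (if j = i then (1:ℤ) else 0) := by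
    intro j
    by_cases h : j = i
    · subst h; simp only [if_pos rfl]; push_cast; omega
    · simp only [if_neg h]; push_cast; omega
  have key : ∀ f : ℕ → ℤ,
      2 * (∑ j ∈ Finset.range (N+1), ((min i j : ℕ) : ℤ) * f j)
        = (∑ j ∈ Finset.range (N+1), ((min (i-1) j : ℕ) : ℤ) * f j)
        + (∑ j ∈ Finset.range (N+1), ((min (i+1) j : ℕ) : ℤ) * f j)
        + (if i ∈ Finset.range (N+1) then f i else 0) := by
    intro f
    have hterm : ∀ j ∈ Finset.range (N+1), 2 * (((min i j : ℕ) : ℤ) * f j)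
        = ((min (i-1) j : ℕ) : ℤ) * f j + (((min (i+1) j : ℕ) : ℤ) * f j
          + (if j = i then f j else 0)) := by
      intro j _
      rw [← mul_assoc, hmin j]
      by_cases h : j = i <;> simp [h] <;> ring
    rw [Finset.mul_sum, Finset.sum_congr rfl hterm, Finset.sum_add_distrib,
      Finset.sum_add_distrib, Finset.sum_ite_eq' (Finset.range (N+1)) i f]
    ring
  set T : ℕ → ℤ := fun i' => ∑ j ∈ Finset.range (N+1), ((min i' j : ℕ) : ℤ) * (L a j : ℤ)
    with hTdef
  set S : ℕ → ℕ → ℤ := fun b i' => ∑ j ∈ Finset.range (N+1), ((min i' j : ℕ) : ℤ) * (m b j : ℤ)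
    with hSdef
  have hvac : ∀ i', vacN n N L m a i'
      = T i' - ∑ b ∈ Finset.range (n+1), cartanA a b * S b i' := by
    intro i'
    unfold vacN
    rw [hTdef, hSdef]
    congr 1
    refine Finset.sum_congr rfl fun b _ => ?_
    rw [Finset.mul_sum]
    exact Finset.sum_congr rfl fun j _ => (mul_assoc _ _ _)
  have hT := key (fun j => (L a j : ℤ))
  have hS : ∀ b, 2 * S b i = S b (i-1) + S b (i+1)
      + (if i ∈ Finset.range (N+1) then (m b i : ℤ) else 0) :=
    fun b => key (fun j => (m b j : ℤ))
  have hsum : (∑ b ∈ Finset.range (n+1), cartanA a b * S b (i-1))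
      + (∑ b ∈ Finset.range (n+1), cartanA a b * S b (i+1))
      + (∑ b ∈ Finset.range (n+1), cartanA a b
          * (if i ∈ Finset.range (N+1) then (m b i : ℤ) else 0))
      = 2 * ∑ b ∈ Finset.range (n+1), cartanA a b * S b i := by
    rw [← Finset.sum_add_distrib, ← Finset.sum_add_distrib, Finset.mul_sum]
    refine Finset.sum_congr rfl fun b _ => ?_
    linear_combination (-(cartanA a b)) * hS b
  have hneg : (∑ b ∈ Finset.range (n+1), cartanA a b
      * (if i ∈ Finset.range (N+1) then (m b i : ℤ) else 0)) ≤ 0 := by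
    refine Finset.sum_nonpos fun b _ => ?_
    by_cases hb : b = a
    · subst hb; simp [hmi]
    · have hc : cartanA a b ≤ 0 := by
        unfold cartanA
        rw [if_neg (fun h => hb h.symm)]
        split <;> norm_num
      have hm : (0:ℤ) ≤ (if i ∈ Finset.range (N+1) then (m b i : ℤ) else 0) := by
        split <;> positivity
      exact mul_nonpos_of_nonpos_of_nonneg hc hm
  have hpos : (0:ℤ) ≤ (if i ∈ Finset.range (N+1) then (L a i : ℤ) else 0) := by
    split <;> positivity
  rw [hvac (i-1), hvac (i+1), hvac i]
  linarith [hT, hsum, hneg, hpos]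
end

section
/- Fix a ∈ {1,…,n−1} and suppose λ_a > 0 (equivalently c_{a−1} > c_a). For any t ∈ 𝒜(λ') and any k ≥ 0 such that there is an integer r > k with r ∉ t_{·,a} and r ≤ c_{a−1}, and an integer s > k with s ∈ t_{·,a+1} (when c_{a+1} > 0), the filling t' obtained by inserting the minimal such r into column a and replacing the minimal such s in column a+1 by c_a + 1 (re-sorting the column decreasingly) lies in 𝒜(λ''), where λ'' has column lengths c'_b = c_b + δ_{a,b}. -/
/-!
The column sets do not collide: `r` is new in column `a`, and `c_a + 1` is new in column `a + 1`
because the entries there are at most `c_a`. So column `a` gains one entry, all at most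
`c_{a-1}`, and column `a + 1` keeps its size with entries at most `c_a + 1 = c'_a`. Writing
each modified set in decreasing order gives strictly decreasing columns with the required
bounds; every other column is untouched, and its bound `c_{b-1}` can only grow.
-/

/-- The set of entries of column `k` of a tableau `t` with column heights `c`. -/
def colSet (c : ℕ → ℕ) (t : ℕ → ℕ → ℕ) (k : ℕ) : Finset ℕ :=
  (Finset.Icc 1 (c k)).image fun j => t j k

/-- Column-height function extended by the convention `c_0 := c_1`. -/
def cext (c : ℕ → ℕ) (k : ℕ) : ℕ := if k = 0 then c 1 else c k

lemma cext_of_ne_zero (c : ℕ → ℕ) {k : ℕ} (hk : k ≠ 0) : cext c k = c k := if_neg hk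

lemma cext_mono {c c' : ℕ → ℕ} (h : ∀ b, c b ≤ c' b) (k : ℕ) : cext c k ≤ cext c' k := by
  unfold cext; split_ifs <;> apply h

lemma colSet_congr_height {c c' : ℕ → ℕ} (t : ℕ → ℕ → ℕ) {k : ℕ} (h : c k = c' k) :
    colSet c t k = colSet c' t k := by
  rw [colSet, colSet, h]

lemma colSet_of_height_eq_zero {c : ℕ → ℕ} (t : ℕ → ℕ → ℕ) {k : ℕ} (h : c k = 0) :
    colSet c t k = ∅ := by
  simp [colSet, h]

lemma lt_of_height_pos {c lam : ℕ → ℕ} {n m : ℕ}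
    (hc : ∀ k, 1 ≤ k → c k = ∑ j ∈ Finset.Icc (k + 1) n, lam j) (hm : 1 ≤ m) (h : 0 < c m) :
    m < n := by
  by_contra hmn
  rw [hc m hm, Finset.Icc_eq_empty (by omega), Finset.sum_empty] at h
  exact h.false

def IsStrictColumn (f : ℕ → ℕ) (h B : ℕ) : Prop :=
  StrictAntiOn f (Set.Icc 1 h) ∧ Set.MapsTo f (Set.Icc 1 h) (Set.Icc 1 B)

lemma isStrictColumn_zero (f : ℕ → ℕ) (B : ℕ) : IsStrictColumn f 0 B := by
  simp [IsStrictColumn, Set.mapsTo_empty, Set.subsingleton_empty.strictAntiOn]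

namespace IsStrictColumn

variable {f : ℕ → ℕ} {h B : ℕ}

lemma of_succ_lt (hdec : ∀ j, 1 ≤ j → j + 1 ≤ h → f (j + 1) < f j)
    (hrange : ∀ j, 1 ≤ j → j ≤ h → 1 ≤ f j ∧ f j ≤ B) : IsStrictColumn f h B :=
  ⟨strictAntiOn_of_succ_lt Set.ordConnected_Icc fun j _ hj hj' => hdec j hj.1 hj'.2,
    fun j hj => hrange j hj.1 hj.2⟩

lemma succ_lt (hf : IsStrictColumn f h B) {j : ℕ} (hj : 1 ≤ j) (hjh : j + 1 ≤ h) :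
    f (j + 1) < f j :=
  hf.1 ⟨hj, by omega⟩ ⟨by omega, hjh⟩ (Nat.lt_succ_self j)

lemma mono (hf : IsStrictColumn f h B) {h' B' : ℕ} (hh : h' ≤ h) (hB : B ≤ B') :
    IsStrictColumn f h' B' :=
  ⟨hf.1.mono (Set.Icc_subset_Icc_right hh),
    (hf.2.mono_left (Set.Icc_subset_Icc_right hh)).mono_right (Set.Icc_subset_Icc_right hB)⟩

variable {c : ℕ → ℕ} {t : ℕ → ℕ → ℕ} {k : ℕ}

lemma card_colSet (hcol : IsStrictColumn (t · k) (c k) B) : (colSet c t k).card = c k := by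
  rw [colSet, Finset.card_image_of_injOn (by simpa using hcol.1.injOn), Nat.card_Icc,
    Nat.add_sub_cancel]

lemma colSet_subset (hcol : IsStrictColumn (t · k) (c k) B) : colSet c t k ⊆ Finset.Icc 1 B := by
  simpa [colSet, Finset.image_subset_iff] using fun j h1 h2 => hcol.2 ⟨h1, h2⟩

lemma insert_erase_colSet_subset (hcol : IsStrictColumn (t · k) (c k) B) (s : ℕ) :
    insert (B + 1) ((colSet c t k).erase s) ⊆ Finset.Icc 1 (B + 1) :=
  Finset.insert_subset (by simp) ((Finset.erase_subset _ _).trans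
    (hcol.colSet_subset.trans (Finset.Icc_subset_Icc_right (Nat.le_succ B))))

lemma card_insert_erase_colSet (hcol : IsStrictColumn (t · k) (c k) B) {s : ℕ}
    (hs : s ∈ colSet c t k) : (insert (B + 1) ((colSet c t k).erase s)).card = c k := by
  have hB : B + 1 ∉ (colSet c t k).erase s := fun hm => by
    simpa using hcol.colSet_subset (Finset.mem_of_mem_erase hm)
  rw [Finset.card_insert_of_notMem hB, Finset.card_erase_add_one hs, hcol.card_colSet]

end IsStrictColumn

-- `decSorted S j` is the `j`-th largest element of `S`, indexed from `1` (junk value `0` outside).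
def decSorted (S : Finset ℕ) (j : ℕ) : ℕ :=
  (S.sort (· ≥ ·)).getD (j - 1) 0

section decSorted

variable (S : Finset ℕ)

lemma decSorted_eq_getElem {j : ℕ} (hj : j - 1 < S.card) :
    decSorted S j = (S.sort (· ≥ ·))[j - 1]'(by simpa using hj) := by
  rw [decSorted, List.getD_eq_getElem]

lemma strictAntiOn_decSorted : StrictAntiOn (decSorted S) (Set.Icc 1 S.card) := by
  rintro i ⟨hi, hiS⟩ j ⟨hj, hjS⟩ hij
  rw [decSorted_eq_getElem S (by omega : j - 1 < S.card),
    decSorted_eq_getElem S (by omega : i - 1 < S.card),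
    (Finset.sortedGT_sort S).getElem_lt_getElem_iff]
  omega

lemma decSorted_mem {j : ℕ} (hj : j ∈ Set.Icc 1 S.card) : decSorted S j ∈ S := by
  obtain ⟨h1, h2⟩ := hj
  rw [decSorted_eq_getElem S (by omega), ← Finset.mem_sort (· ≥ ·)]
  exact List.getElem_mem _

lemma image_decSorted : (Finset.Icc 1 S.card).image (decSorted S) = S := by
  refine Finset.eq_of_subset_of_card_le ?_ ?_
  · simpa [Finset.image_subset_iff] using fun j h1 h2 => decSorted_mem S ⟨h1, h2⟩
  · rw [Finset.card_image_of_injOn (by simpa using (strictAntiOn_decSorted S).injOn),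
      Nat.card_Icc, Nat.add_sub_cancel]

lemma isStrictColumn_decSorted {h B : ℕ} (hS : S ⊆ Finset.Icc 1 B) (hh : h ≤ S.card) :
    IsStrictColumn (decSorted S) h B :=
  IsStrictColumn.mono ⟨strictAntiOn_decSorted S,
    fun _ hj => by simpa using hS (decSorted_mem S hj)⟩ hh le_rfl

end decSorted

def replaceColumn (t : ℕ → ℕ → ℕ) (k : ℕ) (S : Finset ℕ) (j b : ℕ) : ℕ :=
  if b = k then decSorted S j else t j b

section replaceColumn

variable {c : ℕ → ℕ} {t : ℕ → ℕ → ℕ} {k : ℕ} {S : Finset ℕ}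

@[simp]
lemma replaceColumn_self (j : ℕ) : replaceColumn t k S j k = decSorted S j := if_pos rfl

@[simp]
lemma replaceColumn_of_ne {b : ℕ} (hb : b ≠ k) (j : ℕ) : replaceColumn t k S j b = t j b :=
  if_neg hb

lemma colSet_replaceColumn_self (hS : c k = S.card) : colSet c (replaceColumn t k S) k = S := by
  simp only [colSet, replaceColumn_self, hS, image_decSorted]

lemma colSet_replaceColumn_of_ne {b : ℕ} (hb : b ≠ k) :
    colSet c (replaceColumn t k S) b = colSet c t b := by
  simp only [colSet, replaceColumn_of_ne hb]

lemma isStrictColumn_replaceColumn {P : Set ℕ} {h B : ℕ → ℕ}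
    (ht : ∀ b ∈ P, b ≠ k → IsStrictColumn (t · b) (h b) (B b))
    (hS : IsStrictColumn (decSorted S) (h k) (B k)) :
    ∀ b ∈ P, IsStrictColumn (replaceColumn t k S · b) (h b) (B b) := by
  intro b hb
  rcases eq_or_ne b k with rfl | hbk
  · simpa using hS
  · simpa [replaceColumn_of_ne hbk] using ht b hb hbk

end replaceColumn

theorem tableau_modification_step_general
    (n : ℕ) (lam : ℕ → ℕ) (c : ℕ → ℕ)
    (hc : ∀ k, 1 ≤ k → c k = ∑ j ∈ Finset.Icc (k + 1) n, lam j)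
    (t : ℕ → ℕ → ℕ) (a k r s : ℕ)
    (ha1 : 1 ≤ a) (ha2 : a ≤ n - 1)
    (hdec : ∀ kk j, 1 ≤ kk → kk ≤ n - 1 → 1 ≤ j → j + 1 ≤ c kk → t (j + 1) kk < t j kk)
    (hrange : ∀ kk j, 1 ≤ kk → kk ≤ n - 1 → 1 ≤ j → j ≤ c kk →
      1 ≤ t j kk ∧ t j kk ≤ cext c (kk - 1))
    (hr1 : k < r) (hr2 : r ∉ colSet c t a) (hr3 : r ≤ cext c (a - 1))
    (hs : 0 < c (a + 1) →
      k < s ∧ s ∈ colSet c t (a + 1) ∧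
        ∀ s', k < s' → s' ∈ colSet c t (a + 1) → s ≤ s') :
    ∃ t' : ℕ → ℕ → ℕ,
      (∀ kk j, 1 ≤ kk → kk ≤ n - 1 → 1 ≤ j →
          j + 1 ≤ c kk + (if kk = a then 1 else 0) → t' (j + 1) kk < t' j kk) ∧
      (∀ kk j, 1 ≤ kk → kk ≤ n - 1 → 1 ≤ j → j ≤ c kk + (if kk = a then 1 else 0) →
          1 ≤ t' j kk ∧
            t' j kk ≤ cext (fun b => c b + if b = a then 1 else 0) (kk - 1)) ∧
      colSet (fun b => c b + if b = a then 1 else 0) t' a = insert r (colSet c t a) ∧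
      (0 < c (a + 1) →
        colSet (fun b => c b + if b = a then 1 else 0) t' (a + 1) =
          insert (c a + 1) ((colSet c t (a + 1)).erase s)) ∧
      (c (a + 1) = 0 →
        colSet (fun b => c b + if b = a then 1 else 0) t' (a + 1) =
          colSet c t (a + 1)) ∧
      (∀ b, b ≠ a → b ≠ a + 1 →
        colSet (fun b' => c b' + if b' = a then 1 else 0) t' b = colSet c t b) := by
  set c' : ℕ → ℕ := fun b => c b + if b = a then 1 else 0
  have hcc' : ∀ b, c b ≤ c' b := fun b => Nat.le_add_right _ _
  have hcol : ∀ kk, 1 ≤ kk → kk ≤ n - 1 → IsStrictColumn (t · kk) (c kk) (cext c (kk - 1)) :=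
    fun kk h1 h2 => .of_succ_lt (hdec kk · h1 h2) (hrange kk · h1 h2)
  have hsucc : 0 < c (a + 1) → IsStrictColumn (t · (a + 1)) (c (a + 1)) (c a) := fun h => by
    simpa [cext_of_ne_zero c (by omega : a ≠ 0)] using
      hcol (a + 1) (by omega) (Nat.le_sub_one_of_lt (lt_of_height_pos hc (by omega) h))
  set A := insert r (colSet c t a)
  set T := insert (c a + 1) ((colSet c t (a + 1)).erase s)
  have hA : A.card = c' a := by
    simp [A, c', Finset.card_insert_of_notMem hr2, (hcol a ha1 ha2).card_colSet]
  have hT : 0 < c (a + 1) → T.card = c' (a + 1) := fun h => by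
    simpa [c'] using (hsucc h).card_insert_erase_colSet (hs h).2.1
  have hcolA : IsStrictColumn (decSorted A) (c' a) (cext c' (a - 1)) :=
    isStrictColumn_decSorted A (Finset.insert_subset
      (Finset.mem_Icc.2 ⟨by omega, hr3.trans (cext_mono hcc' _)⟩)
      ((hcol a ha1 ha2).mono le_rfl (cext_mono hcc' _)).colSet_subset) hA.ge
  have hcolT : IsStrictColumn (decSorted T) (c' (a + 1)) (cext c' a) := by
    rcases (c (a + 1)).eq_zero_or_pos with h | h
    · simpa [c', h] using isStrictColumn_zero (decSorted T) _
    · simpa [cext_of_ne_zero c' (by omega : a ≠ 0), c'] using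
        isStrictColumn_decSorted T ((hsucc h).insert_erase_colSet_subset s) (hT h).ge
  -- When `c (a + 1) = 0` column `a + 1` is empty in both shapes, so overwriting it is harmless.
  set t' := replaceColumn (replaceColumn t a A) (a + 1) T
  have ht' : ∀ kk ∈ Set.Icc 1 (n - 1), IsStrictColumn (t' · kk) (c' kk) (cext c' (kk - 1)) :=
    isStrictColumn_replaceColumn (fun b hb _ => isStrictColumn_replaceColumn (fun b hb hba =>
      (hcol b hb.1 hb.2).mono (by simp [c', hba]) (cext_mono hcc' _)) hcolA b hb) hcolT
  refine ⟨t', fun kk j h1 h2 h3 h4 => (ht' kk ⟨h1, h2⟩).succ_lt h3 h4,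
    fun kk j h1 h2 h3 h4 => (ht' kk ⟨h1, h2⟩).2 ⟨h3, h4⟩, ?_, ?_, ?_, ?_⟩
  · rw [colSet_replaceColumn_of_ne (by omega), colSet_replaceColumn_self hA.symm]
  · exact fun h => colSet_replaceColumn_self (hT h).symm
  · intro h
    rw [colSet_of_height_eq_zero t h, colSet_of_height_eq_zero _ (by simpa [c'] using h)]
  · intro b hb hb'
    rw [colSet_replaceColumn_of_ne hb', colSet_replaceColumn_of_ne hb]
    exact (colSet_congr_height t (by simp [c', hb])).symm

/-- the tableau-modification step.  Given `t ∈ 𝒜(λ')`, `λ_a > 0`, and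
`r > k` minimal with `r ∉ t_{·,a}`, `r ≤ c_{a-1}`, and (when `c_{a+1} > 0`) `s > k`
minimal with `s ∈ t_{·,a+1}`, the filling `t'` obtained by inserting `r` into column `a`
and replacing `s` in column `a+1` by `c_a + 1` (re-sorting columns decreasingly)
lies in `𝒜(λ'')`, where `λ''` has column lengths `c'_b = c_b + δ_{a,b}`. -/
theorem tableau_modification_step
    (n : ℕ) (hn : 2 ≤ n) (lam : ℕ → ℕ) (c : ℕ → ℕ)
    (hc : ∀ k, 1 ≤ k → c k = ∑ j ∈ Finset.Icc (k + 1) n, lam j)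
    (t : ℕ → ℕ → ℕ) (a k r s : ℕ)
    (ha1 : 1 ≤ a) (ha2 : a ≤ n - 1) (hla : 0 < lam a)
    (hdec : ∀ kk j, 1 ≤ kk → kk ≤ n - 1 → 1 ≤ j → j + 1 ≤ c kk → t (j + 1) kk < t j kk)
    (hrange : ∀ kk j, 1 ≤ kk → kk ≤ n - 1 → 1 ≤ j → j ≤ c kk →
      1 ≤ t j kk ∧ t j kk ≤ cext c (kk - 1))
    (hr1 : k < r) (hr2 : r ∉ colSet c t a) (hr3 : r ≤ cext c (a - 1))
    (hrmin : ∀ r', k < r' → r' ∉ colSet c t a → r ≤ r')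
    (hs : 0 < c (a + 1) →
      k < s ∧ s ∈ colSet c t (a + 1) ∧
        ∀ s', k < s' → s' ∈ colSet c t (a + 1) → s ≤ s') :
    ∃ t' : ℕ → ℕ → ℕ,
      (∀ kk j, 1 ≤ kk → kk ≤ n - 1 → 1 ≤ j →
          j + 1 ≤ c kk + (if kk = a then 1 else 0) → t' (j + 1) kk < t' j kk) ∧
      (∀ kk j, 1 ≤ kk → kk ≤ n - 1 → 1 ≤ j → j ≤ c kk + (if kk = a then 1 else 0) →
          1 ≤ t' j kk ∧
            t' j kk ≤ cext (fun b => c b + if b = a then 1 else 0) (kk - 1)) ∧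
      colSet (fun b => c b + if b = a then 1 else 0) t' a = insert r (colSet c t a) ∧
      (0 < c (a + 1) →
        colSet (fun b => c b + if b = a then 1 else 0) t' (a + 1) =
          insert (c a + 1) ((colSet c t (a + 1)).erase s)) ∧
      (c (a + 1) = 0 →
        colSet (fun b => c b + if b = a then 1 else 0) t' (a + 1) =
          colSet c t (a + 1)) ∧
      (∀ b, b ≠ a → b ≠ a + 1 →
        colSet (fun b' => c b' + if b' = a then 1 else 0) t' b = colSet c t b) :=
  tableau_modification_step_general n lam c hc t a k r s ha1 ha2 hdec hrange hr1 hr2 hr3 hs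
end

section
/- Suppose ν' is obtained from configuration ν by adding a box to a string of length k in ν^{(a)}. Then the configuration cocharge changes by cc(ν') = cc(ν) + 1 + Σ_{b,i} (α_a|α_b) χ(i > k) m_i^{(b)}, where m_i^{(b)} are the multiplicities of ν (before the change). -/
/-- The configuration cocharge `cc(ν) = (1/2) Σ_{(a,j),(b,l)} (α_a|α_b) min(j,l) m_j^{(a)} m_l^{(b)}`. -/
def ccConf (n N : ℕ) (m : ℕ → ℕ → ℕ) : ℚ :=
  (1 / 2 : ℚ) * ∑ a ∈ Finset.range (n + 1), ∑ b ∈ Finset.range (n + 1),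
    ∑ j ∈ Finset.range (N + 1), ∑ l ∈ Finset.range (N + 1),
      (cartanA a b : ℚ) * ((min j l : ℕ) : ℚ) * (m a j : ℚ) * (m b l : ℚ)

lemma collapse (s t : Finset ℕ) (a k : ℕ) (ha : a ∈ s) (hk : k ∈ t) (hk1 : k+1 ∈ t)
    (g : ℕ → ℕ → ℚ) :
    ∑ b ∈ s, ∑ l ∈ t, g b l * ((if b = a ∧ l = k + 1 then (1:ℚ) else 0)
        - (if b = a ∧ l = k then 1 else 0)) = g a (k+1) - g a k := by
  simp only [mul_sub, Finset.sum_sub_distrib, mul_ite, mul_one, mul_zero, ite_and]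
  congr 1 <;> simp [Finset.sum_ite_eq', ha, hk, hk1]

lemma swap4 (s t : Finset ℕ) (F : ℕ → ℕ → ℕ → ℕ → ℚ) :
    ∑ a ∈ s, ∑ b ∈ s, ∑ j ∈ t, ∑ l ∈ t, F a b j l
      = ∑ a ∈ s, ∑ b ∈ s, ∑ j ∈ t, ∑ l ∈ t, F b a l j := by
  rw [Finset.sum_comm]
  refine Finset.sum_congr rfl fun a _ => Finset.sum_congr rfl fun b _ => ?_
  rw [Finset.sum_comm]

lemma cartanA_symm (a b : ℕ) : cartanA a b = cartanA b a := by
  unfold cartanA; split_ifs <;> omega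

lemma minq (k j : ℕ) : ((min j (k+1) : ℕ) : ℚ) - ((min j k : ℕ) : ℚ)
    = if k < j then 1 else 0 := by
  split_ifs with h
  · rw [min_eq_right (by omega), min_eq_right (by omega)]; push_cast; ring
  · rw [min_eq_left (by omega), min_eq_left (by omega)]; ring

/-- if `ν'` is obtained from `ν` by adding a box to a string of length `k`
in `ν^{(a)}` (i.e. `m_k^{(a)} ↦ m_k^{(a)} − 1`, `m_{k+1}^{(a)} ↦ m_{k+1}^{(a)} + 1`), then
`cc(ν') = cc(ν) + 1 + Σ_{b,i} (α_a|α_b) χ(i > k) m_i^{(b)}`. -/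
theorem cocharge_change_under_box_addition
    (n N : ℕ) (hn : 2 ≤ n) (m m' : ℕ → ℕ → ℕ)
    (a k : ℕ) (ha1 : 1 ≤ a) (ha2 : a ≤ n - 1) (hkN : k + 1 ≤ N)
    (hmsupp : ∀ b j, N < j → m b j = 0)
    (hm' : ∀ b j, (m' b j : ℤ) =
      (m b j : ℤ) + (if b = a ∧ j = k + 1 then 1 else 0)
        - (if b = a ∧ j = k then 1 else 0)) :
    ccConf n N m' = ccConf n N m + 1 +
      ∑ b ∈ Finset.range (n + 1), ∑ i ∈ Finset.range (N + 1),
        (cartanA a b : ℚ) * (if k < i then 1 else 0) * (m b i : ℚ) := by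
  have has : a ∈ Finset.range (n + 1) := by simp; omega
  have hkt : k ∈ Finset.range (N + 1) := by simp; omega
  have hk1t : k + 1 ∈ Finset.range (N + 1) := by simp; omega
  have hD : ∀ b j, ((m' b j : ℕ) : ℚ) = (m b j : ℚ)
      + ((if b = a ∧ j = k + 1 then (1:ℚ) else 0) - (if b = a ∧ j = k then 1 else 0)) := by
    intro b j
    have h := hm' b j
    split_ifs at h ⊢
    all_goals first
      | (exfalso; omega)
      | (have e : m' b j = m b j + 1 := by omega
         rw [e]; push_cast; ring)
      | (have e : m b j = m' b j + 1 := by omega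
         rw [e]; push_cast; ring)
      | (have e : m' b j = m b j := by omega
         rw [e]; push_cast; ring)
  have hsplit : ccConf n N m' = ccConf n N m
      + (1/2) * (∑ a' ∈ Finset.range (n + 1), ∑ b' ∈ Finset.range (n + 1),
          ∑ j ∈ Finset.range (N + 1), ∑ l ∈ Finset.range (N + 1),
          (cartanA a' b' : ℚ) * ((min j l : ℕ) : ℚ) * (m a' j : ℚ)
            * ((if b' = a ∧ l = k + 1 then (1:ℚ) else 0) - (if b' = a ∧ l = k then 1 else 0)))
      + (1/2) * (∑ a' ∈ Finset.range (n + 1), ∑ b' ∈ Finset.range (n + 1),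
          ∑ j ∈ Finset.range (N + 1), ∑ l ∈ Finset.range (N + 1),
          (cartanA a' b' : ℚ) * ((min j l : ℕ) : ℚ)
            * ((if a' = a ∧ j = k + 1 then (1:ℚ) else 0) - (if a' = a ∧ j = k then 1 else 0))
            * (m b' l : ℚ))
      + (1/2) * (∑ a' ∈ Finset.range (n + 1), ∑ b' ∈ Finset.range (n + 1),
          ∑ j ∈ Finset.range (N + 1), ∑ l ∈ Finset.range (N + 1),
          (cartanA a' b' : ℚ) * ((min j l : ℕ) : ℚ)
            * ((if a' = a ∧ j = k + 1 then (1:ℚ) else 0) - (if a' = a ∧ j = k then 1 else 0))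
            * ((if b' = a ∧ l = k + 1 then (1:ℚ) else 0) - (if b' = a ∧ l = k then 1 else 0))) := by
    unfold ccConf
    simp only [hD]
    rw [← mul_add, ← mul_add, ← mul_add]
    congr 1
    simp only [← Finset.sum_add_distrib]
    refine Finset.sum_congr rfl fun a' _ => Finset.sum_congr rfl fun b' _ =>
      Finset.sum_congr rfl fun j _ => Finset.sum_congr rfl fun l _ => ?_
    ring
  have hB1 : (∑ a' ∈ Finset.range (n + 1), ∑ b' ∈ Finset.range (n + 1),
          ∑ j ∈ Finset.range (N + 1), ∑ l ∈ Finset.range (N + 1),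
          (cartanA a' b' : ℚ) * ((min j l : ℕ) : ℚ) * (m a' j : ℚ)
            * ((if b' = a ∧ l = k + 1 then (1:ℚ) else 0) - (if b' = a ∧ l = k then 1 else 0)))
      = ∑ b ∈ Finset.range (n + 1), ∑ i ∈ Finset.range (N + 1),
          (cartanA a b : ℚ) * (if k < i then 1 else 0) * (m b i : ℚ) := by
    refine Finset.sum_congr rfl fun a' _ => ?_
    rw [Finset.sum_comm]
    refine Finset.sum_congr rfl fun j _ => ?_
    refine (collapse (Finset.range (n+1)) (Finset.range (N+1)) a k has hkt hk1t
      (fun b l => (cartanA a' b : ℚ) * ((min j l : ℕ) : ℚ) * (m a' j : ℚ))).trans ?_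
    show (cartanA a' a : ℚ) * ((min j (k+1) : ℕ) : ℚ) * (m a' j : ℚ)
        - (cartanA a' a : ℚ) * ((min j k : ℕ) : ℚ) * (m a' j : ℚ) = _
    rw [cartanA_symm a a', ← minq k j]
    ring
  have hB2 : (∑ a' ∈ Finset.range (n + 1), ∑ b' ∈ Finset.range (n + 1),
          ∑ j ∈ Finset.range (N + 1), ∑ l ∈ Finset.range (N + 1),
          (cartanA a' b' : ℚ) * ((min j l : ℕ) : ℚ)
            * ((if a' = a ∧ j = k + 1 then (1:ℚ) else 0) - (if a' = a ∧ j = k then 1 else 0))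
            * (m b' l : ℚ))
      = ∑ b ∈ Finset.range (n + 1), ∑ i ∈ Finset.range (N + 1),
          (cartanA a b : ℚ) * (if k < i then 1 else 0) * (m b i : ℚ) := by
    rw [← hB1, swap4]
    refine Finset.sum_congr rfl fun a' _ => Finset.sum_congr rfl fun b' _ =>
      Finset.sum_congr rfl fun j _ => Finset.sum_congr rfl fun l _ => ?_
    rw [cartanA_symm b' a', Nat.min_comm l j]
    ring
  have hB3 : (∑ a' ∈ Finset.range (n + 1), ∑ b' ∈ Finset.range (n + 1),
          ∑ j ∈ Finset.range (N + 1), ∑ l ∈ Finset.range (N + 1),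
          (cartanA a' b' : ℚ) * ((min j l : ℕ) : ℚ)
            * ((if a' = a ∧ j = k + 1 then (1:ℚ) else 0) - (if a' = a ∧ j = k then 1 else 0))
            * ((if b' = a ∧ l = k + 1 then (1:ℚ) else 0) - (if b' = a ∧ l = k then 1 else 0)))
      = 2 := by
    have step : ∀ a' ∈ Finset.range (n + 1), (∑ b' ∈ Finset.range (n + 1),
          ∑ j ∈ Finset.range (N + 1), ∑ l ∈ Finset.range (N + 1),
          (cartanA a' b' : ℚ) * ((min j l : ℕ) : ℚ)
            * ((if a' = a ∧ j = k + 1 then (1:ℚ) else 0) - (if a' = a ∧ j = k then 1 else 0))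
            * ((if b' = a ∧ l = k + 1 then (1:ℚ) else 0) - (if b' = a ∧ l = k then 1 else 0)))
        = ∑ j ∈ Finset.range (N + 1),
            ((cartanA a' a : ℚ) * ((min j (k+1) : ℕ) : ℚ)
              - (cartanA a' a : ℚ) * ((min j k : ℕ) : ℚ))
            * ((if a' = a ∧ j = k + 1 then (1:ℚ) else 0) - (if a' = a ∧ j = k then 1 else 0)) := by
      intro a' _
      rw [Finset.sum_comm]
      refine Finset.sum_congr rfl fun j _ => ?_
      refine (collapse (Finset.range (n+1)) (Finset.range (N+1)) a k has hkt hk1t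
        (fun b l => (cartanA a' b : ℚ) * ((min j l : ℕ) : ℚ)
          * ((if a' = a ∧ j = k + 1 then (1:ℚ) else 0)
            - (if a' = a ∧ j = k then 1 else 0)))).trans ?_
      show (cartanA a' a : ℚ) * ((min j (k+1) : ℕ) : ℚ) * _
          - (cartanA a' a : ℚ) * ((min j k : ℕ) : ℚ) * _ = _
      ring
    rw [Finset.sum_congr rfl step]
    refine (collapse (Finset.range (n+1)) (Finset.range (N+1)) a k has hkt hk1t
      (fun b j => (cartanA b a : ℚ) * ((min j (k+1) : ℕ) : ℚ)
        - (cartanA b a : ℚ) * ((min j k : ℕ) : ℚ))).trans ?_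
    show (cartanA a a : ℚ) * ((min (k+1) (k+1) : ℕ) : ℚ)
        - (cartanA a a : ℚ) * ((min (k+1) k : ℕ) : ℚ)
        - ((cartanA a a : ℚ) * ((min k (k+1) : ℕ) : ℚ)
          - (cartanA a a : ℚ) * ((min k k : ℕ) : ℚ)) = 2
    have haa : cartanA a a = 2 := by simp [cartanA]
    rw [haa, min_self, min_eq_right (by omega : k ≤ k + 1),
        min_eq_left (by omega : k ≤ k + 1), min_self]
    push_cast
    ring
  rw [hsplit, hB1, hB2, hB3]
  ring
end

section
/- If f_a is defined on (ν,J) (adding a box to a string of length k in the a-th rigged partition, decreasing its label by one and keeping all other colabels fixed), then cc(f_a(ν,J)) = cc(ν,J). That is, the cocharge statistic is invariant under the crystal lowering operators, and hence is constant on each connected crystal component. -/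
/-- invariance of the cocharge `cc(ν,J) = cc(ν) + Σ_{(b,i)} |J^{(b,i)}|` under
the crystal lowering operator `f_a`.  Here `f_a` adds a box to a string of length `k` with
label `s` in `(ν,J)^{(a)}` (so `m_k^{(a)} ↦ m_k^{(a)} − 1`, `m_{k+1}^{(a)} ↦ m_{k+1}^{(a)} + 1`,
the string `(k,s)` is replaced by `(k+1, s−1)`), and keeps all other colabels fixed, so the
labels of strings `(i,x)` with `i > k` in `(ν,J)^{(b)}` change by `x ↦ x − (α_a|α_b)`;
`Jsum b i` records the sum `|J^{(b,i)}|` of the labels of strings of length `i` in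
the `b`-th rigged partition.  Conclusion: `cc(f_a(ν,J)) = cc(ν,J)`. -/
theorem cocharge_invariant_under_f
    (n N : ℕ) (hn : 2 ≤ n) (m m' : ℕ → ℕ → ℕ) (Jsum Jsum' : ℕ → ℕ → ℤ) (s : ℤ)
    (a k : ℕ) (ha1 : 1 ≤ a) (ha2 : a ≤ n - 1) (hkN : k + 1 ≤ N)
    (hmsupp : ∀ b j, N < j → m b j = 0)
    (hJsupp : ∀ b j, N < j → Jsum b j = 0)
    (hm' : ∀ b j, (m' b j : ℤ) =
      (m b j : ℤ) + (if b = a ∧ j = k + 1 then 1 else 0)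
        - (if b = a ∧ j = k then 1 else 0))
    (hJ' : ∀ b i, Jsum' b i =
      Jsum b i - cartanA a b * (if k < i then 1 else 0) * (m b i : ℤ)
        + (if b = a ∧ i = k + 1 then s - 1 else 0)
        - (if b = a ∧ i = k then s else 0)) :
    ccConf n N m' +
        ∑ b ∈ Finset.range (n + 1), ∑ i ∈ Finset.range (N + 1), (Jsum' b i : ℚ) =
      ccConf n N m +
        ∑ b ∈ Finset.range (n + 1), ∑ i ∈ Finset.range (N + 1), (Jsum b i : ℚ) := by
  have han : a < n + 1 := by omega
  have hk1 : k + 1 < N + 1 := by omega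
  have hk0 : k < N + 1 := by omega
  have hm'' : ∀ b j, (m' b j : ℚ) = (m b j : ℚ)
      + (if b = a ∧ j = k + 1 then (1:ℚ) else 0) - (if b = a ∧ j = k then 1 else 0) := by
    intro b j
    have h := congrArg (fun z : ℤ => (z : ℚ)) (hm' b j)
    push_cast at h
    simpa [apply_ite (fun z : ℤ => (z : ℚ))] using h
  have hJ'' : ∀ b i, (Jsum' b i : ℚ) = (Jsum b i : ℚ)
      - (cartanA a b : ℚ) * (if k < i then (1:ℚ) else 0) * (m b i : ℚ)
      + (if b = a ∧ i = k + 1 then ((s : ℚ) - 1) else 0)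
      - (if b = a ∧ i = k then (s : ℚ) else 0) := by
    intro b i
    have h := congrArg (fun z : ℤ => (z : ℚ)) (hJ' b i)
    push_cast at h
    simpa [apply_ite (fun z : ℤ => (z : ℚ))] using h
  simp only [ccConf, hm'', hJ'']
  simp only [mul_add, add_mul, mul_sub, sub_mul, Finset.sum_add_distrib,
    Finset.sum_sub_distrib, mul_ite, ite_mul, mul_zero, zero_mul, mul_one, one_mul,
    ite_and, Finset.sum_ite_irrel, Finset.sum_ite_eq', Finset.mem_range,
    Finset.sum_const_zero, han, hk1, hk0, if_true]

  have csymm : ∀ p q : ℕ, cartanA p q = cartanA q p := by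
    intro p q; unfold cartanA; split_ifs <;> omega
  have caa : cartanA a a = 2 := by simp [cartanA]
  have c1 : (k+1) ⊓ (k+1) = k+1 := by omega
  have c2 : k ⊓ (k+1) = k := by omega
  have c3 : (k+1) ⊓ k = k := by omega
  have c4 : k ⊓ k = k := by omega
  have h1 : ∀ k' : ℕ, ∑ x ∈ Finset.range (n+1), ∑ y ∈ Finset.range (N+1),
      (cartanA x a : ℚ) * ((y ⊓ k' : ℕ) : ℚ) * (m x y : ℚ)
      = ∑ x ∈ Finset.range (n+1), ∑ y ∈ Finset.range (N+1),
      (cartanA a x : ℚ) * ((k' ⊓ y : ℕ) : ℚ) * (m x y : ℚ) := by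
    intro k'
    refine Finset.sum_congr rfl fun x _ => Finset.sum_congr rfl fun y _ => ?_
    rw [csymm x a, inf_comm y k']
  have h3 : ∑ x ∈ Finset.range (n+1), ∑ y ∈ Finset.range (N+1),
        ((cartanA a x : ℚ) * (((k+1) ⊓ y : ℕ) : ℚ) * (m x y : ℚ)
          - (cartanA a x : ℚ) * ((k ⊓ y : ℕ) : ℚ) * (m x y : ℚ))
      = ∑ x ∈ Finset.range (n+1), ∑ y ∈ Finset.range (N+1),
        (if k < y then (cartanA a x : ℚ) * (m x y : ℚ) else 0) := by
    refine Finset.sum_congr rfl fun x _ => Finset.sum_congr rfl fun y _ => ?_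
    rcases lt_or_ge k y with h | h
    · have e1 : (k+1) ⊓ y = k+1 := by omega
      have e2 : k ⊓ y = k := by omega
      rw [if_pos h, e1, e2]; push_cast; ring
    · have e1 : (k+1) ⊓ y = y := by omega
      have e2 : k ⊓ y = y := by omega
      rw [if_neg (by omega), e1, e2]; ring
  simp only [Finset.sum_sub_distrib] at h3
  rw [caa, c1, c2, c3, c4, h1 (k+1), h1 k]
  push_cast
  push_cast at h3
  linarith [h3]
end

section
/- Let e_a be defined by removing a box from the string of smallest length among those with the smallest negative rigging in (ν,J)^{(a)}, keeping all colabels fixed and increasing the new label by one; let f_a be the dual operator adding a box. If f_a(ν,J) is defined, then e_a(f_a(ν,J)) = (ν,J), and if e_a(ν,J) is defined, then f_a(e_a(ν,J)) = (ν,J). -/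
/-- The data of a rigged configuration: for each component `b` and each string length `i`,
the multiset `J b i` of labels (riggings) of the strings of length `i` in the `b`-th
rigged partition.  In particular `m_i^{(b)} = (J b i).card`. -/
abbrev RCdata := ℕ → ℕ → Multiset ℤ

/-- The vacancy number `p_i^{(a)} = Σ_j min(i,j) L_j^{(a)} − Σ_{(b,j)} (α_a|α_b) min(i,j) m_j^{(b)}`. -/
noncomputable def vac (L : ℕ → ℕ → ℕ) (J : RCdata) (a i : ℕ) : ℤ :=
  (∑' j : ℕ, ((min i j : ℕ) : ℤ) * (L a j : ℤ)) -
    ∑' b : ℕ, ∑' j : ℕ, cartanA a b * ((min i j : ℕ) : ℤ) * ((J b j).card : ℤ)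

/-- A valid (unrestricted) rigged configuration: every label is at most the
corresponding vacancy number. -/
def Valid (L : ℕ → ℕ → ℕ) (J : RCdata) : Prop :=
  ∀ b i x, x ∈ J b i → x ≤ vac L J b i

/-- Support conditions: only components `1,…,n-1` occur, strings have positive length,
and all string lengths are bounded. -/
def Supp (n : ℕ) (J : RCdata) : Prop :=
  (∀ b i, (b = 0 ∨ n ≤ b) → J b i = 0) ∧ (∀ b, J b 0 = 0) ∧
    ∃ B, ∀ b i, B < i → J b i = 0

/-- `f_a` with selected string `(k,s)`: `s` is the smallest nonpositive rigging in
`(ν,J)^{(a)}` and `k` the largest length of a string with rigging `s` (or `k = 0`, `s = 0`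
if no nonpositive rigging exists, in which case a new string `(1,-1)` is created).
A box is added to this string, all other colabels are kept fixed (so a label of a string
of length `i > k` in component `b` changes by `−(α_a|α_b)`), and the new label is `s − 1`.
`f_a` is undefined if the result is not a valid unrestricted rigged configuration. -/
def FStepAt (L : ℕ → ℕ → ℕ) (a : ℕ) (s : ℤ) (k : ℕ) (J J' : RCdata) : Prop :=
  s ≤ 0 ∧
  (∀ i x, x ∈ J a i → x ≤ 0 → s ≤ x) ∧
  ((s ∈ J a k ∧ ∀ i, k < i → s ∉ J a i) ∨
    (k = 0 ∧ s = 0 ∧ ∀ i x, x ∈ J a i → 0 < x)) ∧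
  (J' = fun b i =>
    if b = a ∧ i = k then (J a k).erase s
    else if b = a ∧ i = k + 1 then
      Multiset.map (fun x => x - cartanA a b * (if k < i then 1 else 0)) (J b i) + {s - 1}
    else Multiset.map (fun x => x - cartanA a b * (if k < i then 1 else 0)) (J b i)) ∧
  Valid L J'

/-- The crystal operator `f_a` as a relation. -/
def FStep (L : ℕ → ℕ → ℕ) (a : ℕ) (J J' : RCdata) : Prop :=
  ∃ s k, FStepAt L a s k J J'

/-- `e_a` with selected string `(k,s)`: `s` is the smallest negative rigging in
`(ν,J)^{(a)}` and `k` the smallest length of a string with rigging `s`.  A box is removed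
from this string, all other colabels are kept fixed (so a label of a string of length
`i ≥ k` in component `b` changes by `+(α_a|α_b)`), and the new label is `s + 1`
(a string of length `0` disappears).  `e_a` is undefined if no negative rigging exists. -/
def EStepAt (L : ℕ → ℕ → ℕ) (a : ℕ) (s : ℤ) (k : ℕ) (J J' : RCdata) : Prop :=
  s < 0 ∧ 1 ≤ k ∧ s ∈ J a k ∧
  (∀ i x, x ∈ J a i → x < 0 → s ≤ x) ∧
  (∀ i, i < k → s ∉ J a i) ∧
  (J' = fun b i =>
    if b = a ∧ i = k then Multiset.map (fun x => x + 2) ((J a k).erase s)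
    else if b = a ∧ i + 1 = k then J b i + (if k = 1 then 0 else {s + 1})
    else Multiset.map (fun x => x + cartanA a b * (if k ≤ i then 1 else 0)) (J b i))

/-- The crystal operator `e_a` as a relation. -/
def EStep (L : ℕ → ℕ → ℕ) (a : ℕ) (J J' : RCdata) : Prop :=
  ∃ s k, EStepAt L a s k J J'

/-- Highest weight rigged configuration: all riggings are nonnegative (and valid). -/
def HW (L : ℕ → ℕ → ℕ) (J : RCdata) : Prop :=
  Valid L J ∧ ∀ b i x, x ∈ J b i → 0 ≤ x

/-- Membership in `RC(L)`: generated from a highest weight rigged configuration by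
the operators `e_a`, `f_a`, `a ∈ {1,…,n-1}`. -/
def Gen (n : ℕ) (L : ℕ → ℕ → ℕ) (J : RCdata) : Prop :=
  ∃ J0, HW L J0 ∧ Supp n J0 ∧
    Relation.ReflTransGen
      (fun x y => ∃ a, 1 ≤ a ∧ a ≤ n - 1 ∧ (FStep L a x y ∨ EStep L a x y)) J0 J

/-- There is a chain of `q` successive applications of `f_a` starting at `J`. -/
def FChainLen (L : ℕ → ℕ → ℕ) (a : ℕ) (J : RCdata) (q : ℕ) : Prop :=
  ∃ d : ℕ → RCdata, d 0 = J ∧ ∀ j < q, FStep L a (d j) (d (j + 1))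

/-- There is a chain of `q` successive applications of `e_a` starting at `J`. -/
def EChainLen (L : ℕ → ℕ → ℕ) (a : ℕ) (J : RCdata) (q : ℕ) : Prop :=
  ∃ d : ℕ → RCdata, d 0 = J ∧ ∀ j < q, EStep L a (d j) (d (j + 1))

/-- `φ_a(ν,J) = q`: `f_a` can be applied exactly `q` times. -/
def PhiEq (L : ℕ → ℕ → ℕ) (a : ℕ) (J : RCdata) (q : ℕ) : Prop :=
  FChainLen L a J q ∧ ¬ FChainLen L a J (q + 1)

/-- `ε_a(ν,J) = q`: `e_a` can be applied exactly `q` times. -/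
def EpsEq (L : ℕ → ℕ → ℕ) (a : ℕ) (J : RCdata) (q : ℕ) : Prop :=
  EChainLen L a J q ∧ ¬ EChainLen L a J (q + 1)

private lemma ms_map_sub_add (c : ℤ) (M : Multiset ℤ) :
    Multiset.map (fun x => x + c) (Multiset.map (fun x => x - c) M) = M := by
  rw [Multiset.map_map]; simp

private lemma ms_map_add_sub (c : ℤ) (M : Multiset ℤ) :
    Multiset.map (fun x => x - c) (Multiset.map (fun x => x + c) M) = M := by
  rw [Multiset.map_map]; simp

private lemma ms_add_singleton_erase (M : Multiset ℤ) (x : ℤ) : (M + {x}).erase x = M := by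
  rw [add_comm, Multiset.singleton_add, Multiset.erase_cons_head]

private lemma ms_erase_add_singleton (M : Multiset ℤ) (x : ℤ) (h : x ∈ M) :
    M.erase x + {x} = M := by
  rw [add_comm, Multiset.singleton_add, Multiset.cons_erase h]

/-- the crystal operators on unrestricted rigged configurations are
mutually inverse: if `f_a(ν,J)` is defined then `e_a(f_a(ν,J)) = (ν,J)`, and if
`e_a(ν,J)` is defined then `f_a(e_a(ν,J)) = (ν,J)`. -/
theorem ef_inverse
    (L : ℕ → ℕ → ℕ) (a : ℕ) (J J' : RCdata)
    (hValid : Valid L J) (hJ0 : ∀ b, J b 0 = 0)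
    (hlb : ∀ b i x, x ∈ J b i → -(i : ℤ) ≤ x) :
    (FStep L a J J' → EStep L a J' J) ∧ (EStep L a J J' → FStep L a J' J) := by
  have hca : cartanA a a = 2 := by simp [cartanA]
  constructor
  · -- f then e
    rintro ⟨s, k, hs0, hmin, hsel, hJ', -⟩
    have E1 : J' a k = (J a k).erase s := by
      rw [hJ']; beta_reduce
      rw [if_pos ⟨rfl, rfl⟩]
    have E2 : J' a (k + 1) = Multiset.map (fun x => x - 2) (J a (k + 1)) + {s - 1} := by
      rw [hJ']; beta_reduce
      rw [if_neg (by omega : ¬(a = a ∧ k + 1 = k)), if_pos ⟨rfl, rfl⟩]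
      simp only [hca, if_pos (Nat.lt_succ_self k), mul_one]
    have E3 : ∀ i, i ≠ k → i ≠ k + 1 →
        J' a i = Multiset.map (fun x => x - 2 * (if k < i then 1 else 0)) (J a i) := by
      intro i h1 h2
      rw [hJ']; beta_reduce
      rw [if_neg (fun h => h1 h.2), if_neg (fun h => h2 h.2)]
      simp only [hca]
    have E4 : ∀ b, b ≠ a → ∀ i,
        J' b i = Multiset.map (fun x => x - cartanA a b * (if k < i then 1 else 0)) (J b i) := by
      intro b hb i
      rw [hJ']; beta_reduce
      rw [if_neg (fun h => hb h.1), if_neg (fun h => hb h.1)]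
    have hA : ∀ i, k < i → ∀ y ∈ J a i, y ≤ 0 → s + 1 ≤ y := by
      intro i hi y hy hy0
      rcases hsel with ⟨hm, hnot⟩ | ⟨hk, hsz, hpos⟩
      · have h1 := hmin i y hy hy0
        have h2 : y ≠ s := fun h => hnot i hi (h ▸ hy)
        omega
      · have := hpos i y hy; omega
    have hmemk : k ≠ 0 → s ∈ J a k := by
      intro hk
      rcases hsel with ⟨hm, _⟩ | ⟨hk0, _, _⟩
      · exact hm
      · omega
    refine ⟨s - 1, k + 1, by omega, by omega, ?_, ?_, ?_, ?_⟩
    · rw [E2]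
      exact Multiset.mem_add.2 (Or.inr (Multiset.mem_singleton_self _))
    · -- minimality of s - 1 in J'
      intro i x hx hx0
      by_cases h1 : i = k
      · rw [h1, E1] at hx
        have := hmin k x (Multiset.mem_of_mem_erase hx) (le_of_lt hx0)
        omega
      · by_cases h2 : i = k + 1
        · rw [h2, E2] at hx
          rcases Multiset.mem_add.1 hx with h | h
          · obtain ⟨y, hy, rfl⟩ := Multiset.mem_map.1 h
            rcases le_or_gt y 0 with h0 | h0
            · have := hA (k + 1) (Nat.lt_succ_self k) y hy h0
              omega
            · omega
          · rw [Multiset.mem_singleton] at h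
            omega
        · rw [E3 i h1 h2] at hx
          obtain ⟨y, hy, rfl⟩ := Multiset.mem_map.1 hx
          by_cases hki : k < i
          · rw [if_pos hki] at hx0 ⊢
            rcases le_or_gt y 0 with h0 | h0
            · have := hA i hki y hy h0
              omega
            · omega
          · rw [if_neg hki] at hx0 ⊢
            have := hmin i y hy (by omega)
            omega
    · -- no s - 1 in shorter strings of J'
      intro i hi hmem'
      by_cases h1 : i = k
      · rw [h1, E1] at hmem'
        have := hmin k (s - 1) (Multiset.mem_of_mem_erase hmem') (by omega)
        omega
      · rw [E3 i h1 (by omega)] at hmem'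
        obtain ⟨y, hy, heq⟩ := Multiset.mem_map.1 hmem'
        rw [if_neg (by omega : ¬ k < i)] at heq
        have := hmin i y hy (by omega)
        omega
    · -- the formula recovers J
      funext b i
      beta_reduce
      by_cases hb : b = a
      · rw [hb]
        by_cases h1 : i = k + 1
        · rw [if_pos ⟨rfl, h1⟩, h1, E2, ms_add_singleton_erase, ms_map_sub_add]
        · by_cases h2 : i + 1 = k + 1
          · have h2' : i = k := by omega
            rw [if_neg (fun h => h1 h.2), if_pos ⟨rfl, h2⟩, h2', E1]
            by_cases hk : k = 0
            · rw [if_pos (by omega : k + 1 = 1), hk, hJ0 a]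
              simp
            · rw [if_neg (by omega : ¬ k + 1 = 1)]
              have hss : s - 1 + 1 = s := by ring
              rw [hss]
              exact (ms_erase_add_singleton _ _ (hmemk hk)).symm
          · rw [if_neg (fun h => h1 h.2), if_neg (fun h => h2 h.2),
              E3 i (by omega) h1, Multiset.map_map]
            simp only [hca]
            by_cases hki : k < i
            · simp [Function.comp, if_pos hki, if_pos (by omega : k + 1 ≤ i)]
            · simp [Function.comp, if_neg hki, if_neg (by omega : ¬ k + 1 ≤ i)]
      · rw [if_neg (fun h => hb h.1), if_neg (fun h => hb h.1),
          E4 b hb i, Multiset.map_map]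
        by_cases hki : k < i
        · simp [Function.comp, if_pos hki, if_pos (by omega : k + 1 ≤ i)]
        · simp [Function.comp, if_neg hki, if_neg (by omega : ¬ k + 1 ≤ i)]
  · -- e then f
    rintro ⟨s, k, hs, hk1, hmem, hmin, hlt, hJ'⟩
    have E1 : J' a k = Multiset.map (fun x => x + 2) ((J a k).erase s) := by
      rw [hJ']; beta_reduce
      rw [if_pos ⟨rfl, rfl⟩]
    have E2 : ∀ i, i + 1 = k → J' a i = J a i + (if k = 1 then 0 else {s + 1}) := by
      intro i hi
      rw [hJ']; beta_reduce
      rw [if_neg (by omega : ¬(a = a ∧ i = k)), if_pos ⟨rfl, hi⟩]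
    have E3 : ∀ i, i ≠ k → i + 1 ≠ k →
        J' a i = Multiset.map (fun x => x + 2 * (if k ≤ i then 1 else 0)) (J a i) := by
      intro i h1 h2
      rw [hJ']; beta_reduce
      rw [if_neg (fun h => h1 h.2), if_neg (fun h => h2 h.2)]
      simp only [hca]
    have E4 : ∀ b, b ≠ a → ∀ i,
        J' b i = Multiset.map (fun x => x + cartanA a b * (if k ≤ i then 1 else 0)) (J b i) := by
      intro b hb i
      rw [hJ']; beta_reduce
      rw [if_neg (fun h => hb h.1), if_neg (fun h => hb h.1)]
    have hA : ∀ i y, y ∈ J a i → y ≤ 0 → s ≤ y := by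
      intro i y hy h0
      rcases lt_or_ge y 0 with h | h
      · exact hmin i y hy h
      · omega
    have hA' : ∀ i, i < k → ∀ y ∈ J a i, y ≤ 0 → s + 1 ≤ y := by
      intro i hi y hy h0
      have h1 := hA i y hy h0
      have h2 : y ≠ s := fun h => hlt i hi (h ▸ hy)
      omega
    refine ⟨s + 1, k - 1, by omega, ?_, ?_, ?_, hValid⟩
    · -- minimality of s + 1 in J'
      intro i x hx hx0
      by_cases h1 : i = k
      · rw [h1, E1] at hx
        obtain ⟨y, hy, rfl⟩ := Multiset.mem_map.1 hx
        have := hA k y (Multiset.mem_of_mem_erase hy) (by omega)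
        omega
      · by_cases h2 : i + 1 = k
        · rw [E2 i h2] at hx
          rcases Multiset.mem_add.1 hx with h | h
          · exact hA' i (by omega) x h hx0
          · by_cases hk : k = 1
            · rw [if_pos hk] at h
              exact absurd h (Multiset.notMem_zero x)
            · rw [if_neg hk, Multiset.mem_singleton] at h
              omega
        · rw [E3 i h1 h2] at hx
          obtain ⟨y, hy, rfl⟩ := Multiset.mem_map.1 hx
          by_cases hki : k ≤ i
          · rw [if_pos hki] at hx0 ⊢
            have := hA i y hy (by omega)
            omega
          · rw [if_neg hki] at hx0 ⊢
            have := hA' i (by omega) y hy (by omega)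
            omega
    · -- selection condition
      by_cases hk : k = 1
      · right
        have hs1 : s = -1 := by
          have := hlb a k s hmem
          rw [hk] at this
          simp at this
          omega
        refine ⟨by omega, by omega, ?_⟩
        intro i x hx
        by_cases h1 : i = k
        · rw [h1, E1] at hx
          obtain ⟨y, hy, rfl⟩ := Multiset.mem_map.1 hx
          have := hlb a k y (Multiset.mem_of_mem_erase hy)
          rw [hk] at this
          simp at this
          omega
        · by_cases h2 : i + 1 = k
          · rw [E2 i h2] at hx
            have hi0 : i = 0 := by omega
            rw [hi0, hJ0 a, if_pos hk] at hx
            simp at hx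
          · rw [E3 i h1 h2] at hx
            obtain ⟨y, hy, rfl⟩ := Multiset.mem_map.1 hx
            rw [if_pos (by omega : k ≤ i)]
            rcases lt_or_ge y 0 with h0 | h0
            · have := hmin i y hy h0
              omega
            · omega
      · left
        constructor
        · rw [E2 (k - 1) (by omega), if_neg hk]
          exact Multiset.mem_add.2 (Or.inr (Multiset.mem_singleton_self _))
        · intro i hi hmem'
          by_cases h1 : i = k
          · rw [h1, E1] at hmem'
            obtain ⟨y, hy, heq⟩ := Multiset.mem_map.1 hmem'
            have := hmin k y (Multiset.mem_of_mem_erase hy) (by omega)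
            omega
          · rw [E3 i h1 (by omega)] at hmem'
            obtain ⟨y, hy, heq⟩ := Multiset.mem_map.1 hmem'
            rw [if_pos (by omega : k ≤ i)] at heq
            have := hmin i y hy (by omega)
            omega
    · -- the formula recovers J
      funext b i
      beta_reduce
      by_cases hb : b = a
      · rw [hb]
        by_cases h1 : i = k - 1
        · rw [if_pos ⟨rfl, h1⟩, h1, E2 (k - 1) (by omega)]
          by_cases hk : k = 1
          · rw [if_pos hk]
            have : k - 1 = 0 := by omega
            rw [this, hJ0 a]
            simp
          · rw [if_neg hk]
            exact (ms_add_singleton_erase _ _).symm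
        · by_cases h2 : i = k - 1 + 1
          · have h2' : i = k := by omega
            rw [if_neg (fun h => h1 h.2), if_pos ⟨rfl, h2⟩, h2', E1]
            simp only [hca, if_pos (by omega : k - 1 < k), mul_one, add_sub_cancel_right]
            rw [ms_map_add_sub]
            exact (ms_erase_add_singleton _ _ hmem).symm
          · rw [if_neg (fun h => h1 h.2), if_neg (fun h => h2 h.2),
              E3 i (by omega) (by omega), Multiset.map_map]
            simp only [hca]
            by_cases hki : k ≤ i
            · simp [Function.comp, if_pos hki, if_pos (by omega : k - 1 < i)]
            · simp [Function.comp, if_neg hki, if_neg (by omega : ¬ k - 1 < i)]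
      · rw [if_neg (fun h => hb h.1), if_neg (fun h => hb h.1),
          E4 b hb i, Multiset.map_map]
        by_cases hki : k ≤ i
        · simp [Function.comp, if_pos hki, if_pos (by omega : k - 1 < i)]
        · simp [Function.comp, if_neg hki, if_neg (by omega : ¬ k - 1 < i)]
end

section
/- Every string (i, x) in any unrestricted rigged configuration (ν,J) ∈ RC(L) (i.e., any rigged configuration in the crystal generated from highest weight rigged configurations by the operators e_a, f_a) satisfies x ≥ −i. -/
namespace RCAux


/-- sum of the labels of a chain -/
def lsum : List (ℕ × ℤ) → ℤ
  | [] => 0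
  | q :: l => q.2 + lsum l

/-- total ascent cost of a chain of lengths, starting from previous length `p` -/
def cost : ℤ → List (ℕ × ℤ) → ℤ
  | _, [] => 0
  | p, q :: l => max ((q.1 : ℤ) - p) 0 + cost (q.1 : ℤ) l

/-- last length of a chain (with default `p`) -/
def lastL : ℤ → List (ℕ × ℤ) → ℤ
  | p, [] => p
  | _, q :: l => lastL (q.1 : ℤ) l

/-- the chain `l` consists of strings of `J` in consecutive components starting at `b` -/
def ChainMem (J : RCdata) : ℕ → List (ℕ × ℤ) → Prop
  | _, [] => True
  | b, q :: l => q.2 ∈ J b q.1 ∧ ChainMem J (b + 1) l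

/-- The invariant: strings have positive length, and every chain of strings in
consecutive components satisfies the telescoping lower bound. -/
def Inv (J : RCdata) : Prop :=
  (∀ b, J b 0 = 0) ∧ ∀ b l, ChainMem J b l → -cost 0 l ≤ lsum l

theorem lsum_append (l₁ l₂ : List (ℕ × ℤ)) : lsum (l₁ ++ l₂) = lsum l₁ + lsum l₂ := by
  induction l₁ with
  | nil => simp [lsum]
  | cons q l ih => simp [lsum, ih]; ring

theorem cost_append (l₁ l₂ : List (ℕ × ℤ)) (p : ℤ) :
    cost p (l₁ ++ l₂) = cost p l₁ + cost (lastL p l₁) l₂ := by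
  induction l₁ generalizing p with
  | nil => simp [cost, lastL]
  | cons q l ih => simp [cost, lastL, ih]; ring

theorem cost_nonneg (l : List (ℕ × ℤ)) (p : ℤ) : 0 ≤ cost p l := by
  induction l generalizing p with
  | nil => simp [cost]
  | cons q l ih => simp only [cost]; have := ih (q.1 : ℤ); positivity

theorem chainMem_append (J : RCdata) (l₁ l₂ : List (ℕ × ℤ)) (b : ℕ) :
    ChainMem J b (l₁ ++ l₂) ↔ ChainMem J b l₁ ∧ ChainMem J (b + l₁.length) l₂ := by
  induction l₁ generalizing b with
  | nil => simp [ChainMem]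
  | cons q l ih =>
      show q.2 ∈ J b q.1 ∧ ChainMem J (b + 1) (l ++ l₂) ↔ _
      rw [ih]
      have : b + 1 + l.length = b + (q :: l).length := by simp; omega
      rw [this]
      show _ ↔ (q.2 ∈ J b q.1 ∧ ChainMem J (b + 1) l) ∧ _
      tauto

theorem cost_congr (l₁ l₂ : List (ℕ × ℤ)) (p : ℤ)
    (h : l₁.map Prod.fst = l₂.map Prod.fst) : cost p l₁ = cost p l₂ := by
  induction l₁ generalizing l₂ p with
  | nil => cases l₂ <;> simp_all [cost]
  | cons q l ih =>
      cases l₂ with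
      | nil => simp at h
      | cons q' l' =>
          simp only [List.map_cons, List.cons.injEq] at h
          simp [cost, h.1, ih l' _ h.2]

theorem lastL_congr (l₁ l₂ : List (ℕ × ℤ)) (p : ℤ)
    (h : l₁.map Prod.fst = l₂.map Prod.fst) : lastL p l₁ = lastL p l₂ := by
  induction l₁ generalizing l₂ p with
  | nil => cases l₂ <;> simp_all [lastL]
  | cons q l ih =>
      cases l₂ with
      | nil => simp at h
      | cons q' l' =>
          simp only [List.map_cons, List.cons.injEq] at h
          simp [lastL, h.1, ih l' _ h.2]

theorem lastL_concat (l : List (ℕ × ℤ)) (q : ℕ × ℤ) (p : ℤ) :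
    lastL p (l ++ [q]) = (q.1 : ℤ) := by
  induction l generalizing p with
  | nil => simp [lastL]
  | cons q' l ih => simp [lastL, ih]

def headL : List (ℕ × ℤ) → ℤ
  | [] => 0
  | q :: _ => (q.1 : ℤ)

def tailCost : List (ℕ × ℤ) → ℤ
  | [] => 0
  | q :: l => cost (q.1 : ℤ) l

theorem cost_eq (p : ℤ) (l : List (ℕ × ℤ)) :
    cost p l = if l = [] then 0 else max (headL l - p) 0 + tailCost l := by
  cases l <;> simp [cost, headL, tailCost]

theorem length_eq_of_fst_eq {l₁ l₂ : List (ℕ × ℤ)} (h : l₁.map Prod.fst = l₂.map Prod.fst) :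
    l₁.length = l₂.length := by
  have := congrArg List.length h; simpa using this

theorem headL_congr {l₁ l₂ : List (ℕ × ℤ)} (h : l₁.map Prod.fst = l₂.map Prod.fst) :
    headL l₁ = headL l₂ := by
  cases l₁ with
  | nil => cases l₂ <;> simp_all [headL]
  | cons q l =>
      cases l₂ with
      | nil => simp at h
      | cons q' l' =>
          simp only [List.map_cons, List.cons.injEq] at h
          simp [headL, h.1]

theorem chain_headL_pos (J : RCdata) (hz : ∀ c i, (0:ℕ) = i → J c i = 0)
    {l : List (ℕ × ℤ)} {b : ℕ} (hm : ChainMem J b l) (hne : l ≠ []) : 1 ≤ headL l := by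
  cases l with
  | nil => simp at hne
  | cons q l =>
      obtain ⟨hq, -⟩ := hm
      show 1 ≤ (q.1 : ℤ)
      rcases Nat.eq_zero_or_pos q.1 with h | h
      · rw [hz b q.1 h.symm] at hq; simp at hq
      · exact_mod_cast h

theorem chain_lastL_pos (J : RCdata) (hz : ∀ c i, (0:ℕ) = i → J c i = 0) :
    ∀ (l : List (ℕ × ℤ)) (b : ℕ), ChainMem J b l → l ≠ [] → 1 ≤ lastL 0 l := by
  intro l
  induction l with
  | nil => simp
  | cons q l ih =>
      intro b ⟨hq, hm⟩ _
      cases l with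
      | nil =>
          show 1 ≤ lastL (q.1:ℤ) []
          show 1 ≤ (q.1 : ℤ)
          rcases Nat.eq_zero_or_pos q.1 with h | h
          · rw [hz b q.1 h.symm] at hq; simp at hq
          · exact_mod_cast h
      | cons q' l' =>
          show 1 ≤ lastL (q.1:ℤ) (q' :: l')
          have := ih (b+1) hm (by simp)
          -- lastL p (q'::l') does not depend on p
          simpa [lastL] using this

/-- generic pull-back of a chain along a pointwise domination -/
theorem chain_pull (J J' : RCdata) (P : ℕ → Prop)
    (h : ∀ c, P c → ∀ i (x' : ℤ), x' ∈ J' c i → ∃ x, x ∈ J c i ∧ x ≤ x') :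
    ∀ (l : List (ℕ × ℤ)) (b : ℕ), (∀ t, t < l.length → P (b + t)) → ChainMem J' b l →
    ∃ l₀, ChainMem J b l₀ ∧ l₀.map Prod.fst = l.map Prod.fst ∧ lsum l₀ ≤ lsum l := by
  intro l
  induction l with
  | nil => exact fun b _ _ => ⟨[], trivial, rfl, le_refl 0⟩
  | cons q l ih =>
      intro b hP ⟨hq, hl⟩
      obtain ⟨x, hx, hxle⟩ := h b (by simpa using hP 0 (by simp)) q.1 q.2 hq
      obtain ⟨l₀, h1, h2, h3⟩ := ih (b + 1) (fun t ht => by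
        have h5 := hP (t + 1) (by simp; omega)
        have : b + (t + 1) = b + 1 + t := by omega
        rwa [this] at h5) hl
      refine ⟨(q.1, x) :: l₀, ⟨hx, h1⟩, by simp [h2], ?_⟩
      show x + lsum l₀ ≤ q.2 + lsum l
      omega

theorem cartanA_self (a : ℕ) : cartanA a a = 2 := by simp [cartanA]

theorem cartanA_adj {a c : ℕ} (h : a + 1 = c ∨ c + 1 = a) : cartanA a c = -1 := by
  unfold cartanA
  rw [if_neg (by omega), if_pos h]

theorem cartanA_far {a c : ℕ} (h1 : a ≠ c) (h2 : ¬(a + 1 = c ∨ c + 1 = a)) :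
    cartanA a c = 0 := by
  unfold cartanA
  rw [if_neg h1, if_neg h2]

theorem fstep_inv {L : ℕ → ℕ → ℕ} {a : ℕ} {s : ℤ} {k : ℕ} {J J' : RCdata}
    (hF : FStepAt L a s k J J') (hI : Inv J) : Inv J' := by
  obtain ⟨hs0, hmin, hsel, hJ', -⟩ := hF
  obtain ⟨hz, hchain⟩ := hI
  have hE : ∀ c i, J' c i = (if c = a ∧ i = k then (J a k).erase s
      else if c = a ∧ i = k + 1 then
        Multiset.map (fun x => x - cartanA a c * (if k < i then 1 else 0)) (J c i) + {s - 1}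
      else Multiset.map (fun x => x - cartanA a c * (if k < i then 1 else 0)) (J c i)) := by
    intro c i; rw [hJ']
  have hfar : ∀ c, ¬(c = a) → ¬(a + 1 = c ∨ c + 1 = a) → ∀ i, J' c i = J c i := by
    intro c h1 h2 i
    rw [hE, if_neg (fun h => h1 h.1), if_neg (fun h => h1 h.1),
      cartanA_far (fun h => h1 h.symm) h2]
    simp
  have hadj : ∀ c, (a + 1 = c ∨ c + 1 = a) → ∀ i,
      J' c i = Multiset.map (fun x => x + (if k < i then (1:ℤ) else 0)) (J c i) := by
    intro c hc i
    have h1 : ¬(c = a) := by omega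
    rw [hE, if_neg (fun h => h1 h.1), if_neg (fun h => h1 h.1), cartanA_adj hc]
    congr 1
    funext x
    ring
  have ha_lt : ∀ i, i < k → J' a i = J a i := by
    intro i hik
    rw [hE, if_neg (fun h => absurd h.2 (by omega)), if_neg (fun h => absurd h.2 (by omega)),
      cartanA_self]
    simp only [if_neg (show ¬ k < i by omega), mul_zero, sub_zero, Multiset.map_id']
  have ha_k : J' a k = (J a k).erase s := by
    rw [hE, if_pos ⟨rfl, rfl⟩]
  have ha_k1 : J' a (k + 1) = Multiset.map (fun x : ℤ => x - 2) (J a (k + 1)) + {s - 1} := by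
    rw [hE, if_neg (fun h => absurd h.2 (by omega)), if_pos ⟨rfl, rfl⟩, cartanA_self]
    simp only [if_pos (show k < k + 1 by omega), mul_one]
  have ha_gt : ∀ i, k < i → i ≠ k + 1 → J' a i = Multiset.map (fun x : ℤ => x - 2) (J a i) := by
    intro i h1 h2
    rw [hE, if_neg (fun h => absurd h.2 (by omega)), if_neg (fun h => absurd h.2 h2),
      cartanA_self]
    simp only [if_pos h1, mul_one]
  have hz' : ∀ c i, (0:ℕ) = i → J' c i = 0 := by
    intro c i hi
    cases hi
    rw [hE]
    by_cases h1 : c = a ∧ (0:ℕ) = k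
    · rw [if_pos h1, ← h1.2, hz a, Multiset.erase_zero]
    · rw [if_neg h1, if_neg (fun h => absurd h.2 (by omega)), hz c]
      simp
  have hpull : ∀ c, ¬(c = a) → ∀ i (x' : ℤ), x' ∈ J' c i → ∃ x, x ∈ J c i ∧ x ≤ x' := by
    intro c hc i x' hx'
    by_cases hadj' : a + 1 = c ∨ c + 1 = a
    · rw [hadj c hadj' i] at hx'
      obtain ⟨x, hx, hxe⟩ := Multiset.mem_map.1 hx'
      refine ⟨x, hx, ?_⟩
      rw [← hxe]
      split <;> omega
    · rw [hfar c hc hadj' i] at hx'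
      exact ⟨x', hx', le_refl _⟩
  constructor
  · intro b; exact hz' b 0 rfl
  intro b l hmem
  by_cases hin : b ≤ a ∧ a < b + l.length
  case neg =>
    have hout : ∀ t, t < l.length → ¬ (b + t = a) := by
      intro t ht h
      exact hin ⟨by omega, by omega⟩
    obtain ⟨l₀, h1, h2, h3⟩ := chain_pull J J' (fun c => ¬(c = a)) hpull l b hout hmem
    have h4 := hchain b l₀ h1
    rw [cost_congr l₀ l 0 h2] at h4
    omega
  case pos =>
  obtain ⟨hble, hbl⟩ := hin
  have hplen : a - b < l.length := by omega
  obtain ⟨l₁, q, l₂, hsplit, hlen₁⟩ :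
      ∃ (l₁ : List (ℕ × ℤ)) (q : ℕ × ℤ) (l₂ : List (ℕ × ℤ)), l = l₁ ++ q :: l₂ ∧ l₁.length = a - b :=
    ⟨l.take (a - b), l[a - b]'hplen, l.drop (a - b + 1),
      by rw [← List.drop_eq_getElem_cons hplen, List.take_append_drop],
      by simp [List.length_take]; omega⟩
  subst hsplit
  have hba : b + l₁.length = a := by omega
  rw [chainMem_append] at hmem
  obtain ⟨hm₁, hm₂'⟩ := hmem
  rw [hba] at hm₂'
  obtain ⟨hq, hm₂⟩ := hm₂'
  -- left segment pull with boundary gain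
  obtain ⟨l₁₀, gL, hm₁₀, hfst₁, hgL0, hgLs, hgL1⟩ :
      ∃ (l₀ : List (ℕ × ℤ)) (g : ℤ), ChainMem J b l₀ ∧ l₀.map Prod.fst = l₁.map Prod.fst ∧ 0 ≤ g ∧
        lsum l₀ + g ≤ lsum l₁ ∧ ((k:ℤ) < lastL 0 l₁ → 1 ≤ g) := by
    rcases List.eq_nil_or_concat l₁ with h | ⟨l₁', qL, h⟩
    · subst h
      exact ⟨[], 0, trivial, rfl, le_refl _, by simp [lsum],
        fun hk => absurd hk (by simp [lastL])⟩
    · rw [List.concat_eq_append] at h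
      subst h
      rw [chainMem_append] at hm₁
      obtain ⟨hm₁', hqL, -⟩ := hm₁
      have hcomp : (b + l₁'.length) + 1 = a := by
        simp only [List.length_append, List.length_cons, List.length_nil] at hba
        omega
      rw [hadj _ (Or.inr hcomp) _] at hqL
      obtain ⟨y, hy, hye⟩ := Multiset.mem_map.1 hqL
      have hout : ∀ t, t < l₁'.length → ¬ (b + t = a) := by
        intro t ht h; omega
      obtain ⟨l₀', h1, h2, h3⟩ := chain_pull J J' (fun c => ¬(c = a)) hpull l₁' b hout hm₁'
      refine ⟨l₀' ++ [(qL.1, y)], if k < qL.1 then (1:ℤ) else 0, ?_, by simp [h2], ?_, ?_, ?_⟩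
      · rw [chainMem_append]
        refine ⟨h1, ?_⟩
        rw [length_eq_of_fst_eq h2]
        exact ⟨hy, trivial⟩
      · split <;> norm_num
      · rw [lsum_append, lsum_append]
        simp only [lsum]
        by_cases hkq : k < qL.1
        · rw [if_pos hkq]
          rw [if_pos hkq] at hye
          omega
        · rw [if_neg hkq]
          rw [if_neg hkq] at hye
          omega
      · intro hk
        rw [lastL_concat] at hk
        rw [if_pos (by exact_mod_cast hk)]
  -- right segment pull with boundary gain
  obtain ⟨l₂₀, gR, hm₂₀, hfst₂, hgR0, hgRs, hgR1⟩ :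
      ∃ (l₀ : List (ℕ × ℤ)) (g : ℤ), ChainMem J (a+1) l₀ ∧ l₀.map Prod.fst = l₂.map Prod.fst ∧ 0 ≤ g ∧
        lsum l₀ + g ≤ lsum l₂ ∧ ((k:ℤ) < headL l₂ → 1 ≤ g) := by
    cases l₂ with
    | nil =>
        exact ⟨[], 0, trivial, rfl, le_refl _, by simp [lsum],
          fun hk => absurd hk (by simp [headL])⟩
    | cons qh l₂' =>
        obtain ⟨hqh, hm₂''⟩ := hm₂
        rw [hadj _ (Or.inl rfl) _] at hqh
        obtain ⟨y, hy, hye⟩ := Multiset.mem_map.1 hqh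
        have hout : ∀ t, t < l₂'.length → ¬ (a + 1 + 1 + t = a) := by
          intro t ht h; omega
        obtain ⟨l₀', h1, h2, h3⟩ := chain_pull J J' (fun c => ¬(c = a)) hpull l₂' (a+1+1) hout hm₂''
        refine ⟨(qh.1, y) :: l₀', if k < qh.1 then (1:ℤ) else 0, ⟨hy, h1⟩, by simp [h2],
          by split <;> norm_num, ?_, ?_⟩
        · simp only [lsum]
          by_cases hkq : k < qh.1
          · rw [if_pos hkq]; rw [if_pos hkq] at hye; omega
          · rw [if_neg hkq]; rw [if_neg hkq] at hye; omega
        · intro hk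
          have : k < qh.1 := by
            simp only [headL] at hk
            exact_mod_cast hk
          rw [if_pos this]
  have hlen₁₀ : l₁₀.length = l₁.length := length_eq_of_fst_eq hfst₁
  have mkchain : ∀ (m1 : ℕ) (mx : ℤ), mx ∈ J a m1 →
      -(cost 0 l₁ + (max ((m1:ℤ) - lastL 0 l₁) 0 + cost (m1:ℤ) l₂)) ≤
        lsum l₁₀ + (mx + lsum l₂₀) := by
    intro m1 mx hm
    have hcm : ChainMem J b (l₁₀ ++ (m1, mx) :: l₂₀) := by
      rw [chainMem_append]
      refine ⟨hm₁₀, ?_⟩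
      have h4 : b + l₁₀.length = a := by omega
      rw [h4]
      exact ⟨hm, hm₂₀⟩
    have h5 := hchain b _ hcm
    rw [cost_append, lsum_append] at h5
    simp only [cost, lsum] at h5
    rw [cost_congr l₁₀ l₁ 0 hfst₁, lastL_congr l₁₀ l₁ 0 hfst₁,
      cost_congr l₂₀ l₂ _ hfst₂] at h5
    exact h5
  rw [cost_append, lsum_append]
  simp only [cost, lsum]
  -- goal : -(cost 0 l₁ + (max (↑q.1 - lastL 0 l₁) 0 + cost ↑q.1 l₂)) ≤ lsum l₁ + (q.2 + lsum l₂)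
  have goal_old_high : ∀ y : ℤ, y ∈ J a q.1 → y - 2 = q.2 → k < q.1 →
      -(cost 0 l₁ + (max ((q.1:ℤ) - lastL 0 l₁) 0 + cost (q.1:ℤ) l₂)) ≤
        lsum l₁ + (q.2 + lsum l₂) := by
    intro y hy hye hkq
    rcases hsel with ⟨hsk, hsmax⟩ | ⟨hk0, hs00, hpos⟩
    · -- selection case A
      have hys : s + 1 ≤ y := by
        rcases le_or_gt y 0 with h | h
        · have h1 := hmin q.1 y hy h
          have h2 : y ≠ s := fun he => hsmax q.1 hkq (he ▸ hy)
          omega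
        · omega
      by_cases hg2 : (k:ℤ) < lastL 0 l₁ ∧ (k:ℤ) < headL l₂
      · have hgl := hgL1 hg2.1
        have hgr := hgR1 hg2.2
        have h6 := mkchain q.1 y hy
        omega
      · have hsub := mkchain k s hsk
        rw [cost_eq ((k:ℤ)) l₂] at hsub
        rw [cost_eq ((q.1:ℤ)) l₂]
        by_cases hl2 : l₂ = []
        · rw [if_pos hl2] at hsub ⊢
          by_cases hgl : (k:ℤ) < lastL 0 l₁
          · have := hgL1 hgl; omega
          · omega
        · rw [if_neg hl2] at hsub ⊢
          by_cases hgl : (k:ℤ) < lastL 0 l₁ <;> by_cases hgr : (k:ℤ) < headL l₂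
          · exact absurd ⟨hgl, hgr⟩ hg2
          · have := hgL1 hgl; omega
          · have := hgR1 hgr; omega
          · omega
    · -- selection case B
      subst hk0; subst hs00
      have hy1 : 1 ≤ y := hpos q.1 y hy
      by_cases hl1 : l₁ = []
      · -- split route, left empty
        have hl10 : l₁₀ = [] := by
          have := hfst₁
          rw [hl1] at this
          simpa using List.map_eq_nil_iff.1 this
        have H2 := hchain (a+1) l₂₀ hm₂₀
        rw [cost_congr l₂₀ l₂ 0 hfst₂] at H2
        rw [cost_eq ((q.1:ℤ)) l₂]
        rw [cost_eq 0 l₂] at H2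
        subst hl1; subst hl10
        simp only [lsum, cost, lastL] at *
        by_cases hl2 : l₂ = []
        · rw [if_pos hl2] at H2 ⊢
          omega
        · rw [if_neg hl2] at H2 ⊢
          have hR := hgR1 (by
            have := chain_headL_pos J' hz' hm₂ hl2
            omega)
          omega
      · by_cases hl2 : l₂ = []
        · -- split route, right empty
          have H1 := hchain b l₁₀ hm₁₀
          rw [cost_congr l₁₀ l₁ 0 hfst₁] at H1
          have hL := hgL1 (by
            have := chain_lastL_pos J' hz' l₁ b hm₁ hl1
            omega)
          subst hl2
          simp only [lsum, cost] at *
          omega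
        · -- both nonempty: plain with two gains
          have hgl := hgL1 (by
            have := chain_lastL_pos J' hz' l₁ b hm₁ hl1
            omega)
          have hgr := hgR1 (by
            have := chain_headL_pos J' hz' hm₂ hl2
            omega)
          have h6 := mkchain q.1 y hy
          omega
  have goal_new : q.1 = k + 1 → q.2 = s - 1 →
      -(cost 0 l₁ + (max ((q.1:ℤ) - lastL 0 l₁) 0 + cost (q.1:ℤ) l₂)) ≤
        lsum l₁ + (q.2 + lsum l₂) := by
    intro hq1 hqs
    rcases hsel with ⟨hsk, -⟩ | ⟨hk0, hs00, -⟩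
    · -- substitution with (k, s)
      have hsub := mkchain k s hsk
      rw [cost_eq ((k:ℤ)) l₂] at hsub
      rw [cost_eq ((q.1:ℤ)) l₂]
      by_cases hl2 : l₂ = []
      · rw [if_pos hl2] at hsub ⊢
        by_cases hgl : (k:ℤ) < lastL 0 l₁
        · have := hgL1 hgl; omega
        · omega
      · rw [if_neg hl2] at hsub ⊢
        have hh1 : 1 ≤ headL l₂ := chain_headL_pos J' hz' hm₂ hl2
        by_cases hgl : (k:ℤ) < lastL 0 l₁ <;> by_cases hgr : (k:ℤ) < headL l₂
        · have h7 := hgL1 hgl; have h8 := hgR1 hgr; omega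
        · have := hgL1 hgl; omega
        · have := hgR1 hgr; omega
        · omega
    · -- case B : k = 0, s = 0, new string (1, -1); split route
      subst hk0; subst hs00
      have H2 := hchain (a+1) l₂₀ hm₂₀
      rw [cost_congr l₂₀ l₂ 0 hfst₂] at H2
      have H1 := hchain b l₁₀ hm₁₀
      rw [cost_congr l₁₀ l₁ 0 hfst₁] at H1
      rw [cost_eq ((q.1:ℤ)) l₂]
      rw [cost_eq 0 l₂] at H2
      by_cases hl1 : l₁ = []
      · have hl10 : l₁₀ = [] := by
          have := hfst₁
          rw [hl1] at this
          simpa using List.map_eq_nil_iff.1 this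
        subst hl1; subst hl10
        simp only [lsum, cost, lastL] at *
        by_cases hl2 : l₂ = []
        · rw [if_pos hl2] at H2 ⊢
          omega
        · rw [if_neg hl2] at H2 ⊢
          have hh1 : 1 ≤ headL l₂ := chain_headL_pos J' hz' hm₂ hl2
          have hR := hgR1 (by omega)
          omega
      · have hL := hgL1 (by
          have := chain_lastL_pos J' hz' l₁ b hm₁ hl1
          omega)
        have hLL : 1 ≤ lastL 0 l₁ := chain_lastL_pos J' hz' l₁ b hm₁ hl1
        by_cases hl2 : l₂ = []
        · rw [if_pos hl2] at H2 ⊢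
          subst hl2
          simp only [lsum] at *
          omega
        · rw [if_neg hl2] at H2 ⊢
          have hh1 : 1 ≤ headL l₂ := chain_headL_pos J' hz' hm₂ hl2
          have hR := hgR1 (by omega)
          omega
  rcases lt_trichotomy q.1 k with hqk | hqk | hqk
  · rw [ha_lt q.1 hqk] at hq
    have h6 := mkchain q.1 q.2 hq
    omega
  · rw [hqk] at hq ⊢
    rw [ha_k] at hq
    have h6 := mkchain k q.2 (Multiset.mem_of_mem_erase hq)
    omega
  · by_cases hq1 : q.1 = k + 1
    · rw [hq1, ha_k1] at hq
      rcases Multiset.mem_add.1 hq with hq' | hq'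
      · obtain ⟨y, hy, hye⟩ := Multiset.mem_map.1 hq'
        exact goal_old_high y (by rwa [← hq1] at hy) hye hqk
      · exact goal_new hq1 (Multiset.mem_singleton.1 hq')
    · rw [ha_gt q.1 hqk hq1] at hq
      obtain ⟨y, hy, hye⟩ := Multiset.mem_map.1 hq
      exact goal_old_high y hy hye hqk

theorem estep_inv {L : ℕ → ℕ → ℕ} {a : ℕ} {s : ℤ} {k : ℕ} {J J' : RCdata}
    (hEs : EStepAt L a s k J J') (hI : Inv J) : Inv J' := by
  obtain ⟨hsneg, hk1, hsk, hmin, hnotlt, hJ'⟩ := hEs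
  obtain ⟨hz, hchain⟩ := hI
  have hE : ∀ c i, J' c i = (if c = a ∧ i = k then Multiset.map (fun x => x + 2) ((J a k).erase s)
      else if c = a ∧ i + 1 = k then J c i + (if k = 1 then 0 else {s + 1})
      else Multiset.map (fun x => x + cartanA a c * (if k ≤ i then 1 else 0)) (J c i)) := by
    intro c i; rw [hJ']
  have hfar : ∀ c, ¬(c = a) → ¬(a + 1 = c ∨ c + 1 = a) → ∀ i, J' c i = J c i := by
    intro c h1 h2 i
    rw [hE, if_neg (fun h => h1 h.1), if_neg (fun h => h1 h.1),
      cartanA_far (fun h => h1 h.symm) h2]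
    simp
  have hadj : ∀ c, (a + 1 = c ∨ c + 1 = a) → ∀ i,
      J' c i = Multiset.map (fun x => x - (if k ≤ i then (1:ℤ) else 0)) (J c i) := by
    intro c hc i
    have h1 : ¬(c = a) := by omega
    rw [hE, if_neg (fun h => h1 h.1), if_neg (fun h => h1 h.1), cartanA_adj hc]
    congr 1
    funext x
    ring
  have ha_k : J' a k = Multiset.map (fun x : ℤ => x + 2) ((J a k).erase s) := by
    rw [hE, if_pos ⟨rfl, rfl⟩]
  have ha_km1 : ∀ i, i + 1 = k → J' a i = J a i + (if k = 1 then 0 else {s + 1}) := by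
    intro i hik
    rw [hE, if_neg (fun h => absurd h.2 (by omega)), if_pos ⟨rfl, hik⟩]
  have ha_lt : ∀ i, i + 1 < k → J' a i = J a i := by
    intro i hik
    rw [hE, if_neg (fun h => absurd h.2 (by omega)), if_neg (fun h => absurd h.2 (by omega)),
      cartanA_self]
    simp only [if_neg (show ¬ k ≤ i by omega), mul_zero, add_zero, Multiset.map_id']
  have ha_gt : ∀ i, k < i → J' a i = Multiset.map (fun x : ℤ => x + 2) (J a i) := by
    intro i h1
    rw [hE, if_neg (fun h => absurd h.2 (by omega)), if_neg (fun h => absurd h.2 (by omega)),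
      cartanA_self]
    simp only [if_pos (show k ≤ i by omega), mul_one]
  have hz' : ∀ c i, (0:ℕ) = i → J' c i = 0 := by
    intro c i hi
    cases hi
    rw [hE, if_neg (fun h => absurd h.2 (by omega))]
    by_cases h2 : c = a ∧ 0 + 1 = k
    · rw [if_pos h2, if_pos (by omega), hz c]
      simp
    · rw [if_neg h2, hz c]
      simp
  have hpull : ∀ c, (¬(c = a) ∧ ¬(a + 1 = c ∨ c + 1 = a)) →
      ∀ i (x' : ℤ), x' ∈ J' c i → ∃ x, x ∈ J c i ∧ x ≤ x' := by
    intro c hc i x' hx'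
    rw [hfar c hc.1 hc.2 i] at hx'
    exact ⟨x', hx', le_refl _⟩
  have hs1 : s ≤ -1 := by omega
  constructor
  · intro b; exact hz' b 0 rfl
  intro b l hmem
  by_cases hin : b ≤ a ∧ a < b + l.length
  case neg =>
    by_cases hHd : a + 1 = b
    · -- chain sits right of a; head may be adjacent
      cases l with
      | nil => simp [cost, lsum]
      | cons qh l' =>
          obtain ⟨hqh, hm'⟩ := hmem
          rw [hadj _ (Or.inl hHd) _] at hqh
          obtain ⟨y, hy, hye⟩ := Multiset.mem_map.1 hqh
          have hout : ∀ t, t < l'.length →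
              (¬(b + 1 + t = a) ∧ ¬(a + 1 = b + 1 + t ∨ b + 1 + t + 1 = a)) := by
            intro t ht; omega
          obtain ⟨l₀', h1, h2, h3⟩ := chain_pull J J' _ hpull l' (b + 1) hout hm'
          simp only [cost, lsum]
          by_cases hki : k ≤ qh.1
          · have hcm : ChainMem J a ((k, s) :: (qh.1, y) :: l₀') := by
              refine ⟨hsk, ?_⟩
              rw [hHd]
              exact ⟨hy, h1⟩
            have h5 := hchain a _ hcm
            simp only [cost, lsum] at h5
            rw [cost_congr l₀' l' _ h2] at h5
            rw [if_pos hki] at hye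
            omega
          · have hcm : ChainMem J b ((qh.1, y) :: l₀') := ⟨hy, h1⟩
            have h5 := hchain b _ hcm
            simp only [cost, lsum] at h5
            rw [cost_congr l₀' l' _ h2] at h5
            rw [if_neg hki] at hye
            omega
    · by_cases hTl : b + l.length = a
      · -- chain sits left of a; last may be adjacent
        rcases List.eq_nil_or_concat l with h | ⟨l', qL, h⟩
        · subst h; simp [cost, lsum]
        · rw [List.concat_eq_append] at h
          subst h
          rw [chainMem_append] at hmem
          obtain ⟨hm', hqL, -⟩ := hmem
          have hcomp : (b + l'.length) + 1 = a := by
            simp only [List.length_append, List.length_cons, List.length_nil] at hTl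
            omega
          rw [hadj _ (Or.inr hcomp) _] at hqL
          obtain ⟨y, hy, hye⟩ := Multiset.mem_map.1 hqL
          have hout : ∀ t, t < l'.length →
              (¬(b + t = a) ∧ ¬(a + 1 = b + t ∨ b + t + 1 = a)) := by
            intro t ht; omega
          obtain ⟨l₀', h1, h2, h3⟩ := chain_pull J J' _ hpull l' b hout hm'
          rw [cost_append, lsum_append]
          simp only [cost, lsum]
          by_cases hki : k ≤ qL.1
          · have hcm : ChainMem J b (l₀' ++ [(qL.1, y), (k, s)]) := by
              rw [chainMem_append]
              refine ⟨h1, ?_⟩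
              rw [length_eq_of_fst_eq h2]
              exact ⟨hy, hcomp ▸ hsk, trivial⟩
            have h5 := hchain b _ hcm
            rw [cost_append, lsum_append] at h5
            simp only [cost, lsum] at h5
            rw [cost_congr l₀' l' 0 h2, lastL_congr l₀' l' 0 h2] at h5
            rw [if_pos hki] at hye
            omega
          · have hcm : ChainMem J b (l₀' ++ [(qL.1, y)]) := by
              rw [chainMem_append]
              refine ⟨h1, ?_⟩
              rw [length_eq_of_fst_eq h2]
              exact ⟨hy, trivial⟩
            have h5 := hchain b _ hcm
            rw [cost_append, lsum_append] at h5
            simp only [cost, lsum] at h5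
            rw [cost_congr l₀' l' 0 h2, lastL_congr l₀' l' 0 h2] at h5
            rw [if_neg hki] at hye
            omega
      · -- fully far
        have hout : ∀ t, t < l.length →
            (¬(b + t = a) ∧ ¬(a + 1 = b + t ∨ b + t + 1 = a)) := by
          intro t ht
          constructor
          · intro h; exact hin ⟨by omega, by omega⟩
          · intro h
            rcases h with h | h
            · rcases Nat.lt_or_ge a b with h' | h'
              · omega
              · exact hin ⟨h', by omega⟩
            · -- b + t + 1 = a : then b + l.length ≤ a (else in-range) and ≠ a forces contradiction
              rcases Nat.lt_or_ge a (b + l.length) with h' | h'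
              · exact hin ⟨by omega, h'⟩
              · omega
        obtain ⟨l₀, h1, h2, h3⟩ := chain_pull J J' _ hpull l b hout hmem
        have h4 := hchain b l₀ h1
        rw [cost_congr l₀ l 0 h2] at h4
        omega
  case pos =>
  obtain ⟨hble, hbl⟩ := hin
  have hplen : a - b < l.length := by omega
  obtain ⟨l₁, q, l₂, hsplit, hlen₁⟩ :
      ∃ (l₁ : List (ℕ × ℤ)) (q : ℕ × ℤ) (l₂ : List (ℕ × ℤ)), l = l₁ ++ q :: l₂ ∧ l₁.length = a - b :=
    ⟨l.take (a - b), l[a - b]'hplen, l.drop (a - b + 1),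
      by rw [← List.drop_eq_getElem_cons hplen, List.take_append_drop],
      by simp [List.length_take]; omega⟩
  subst hsplit
  have hba : b + l₁.length = a := by omega
  rw [chainMem_append] at hmem
  obtain ⟨hm₁, hm₂'⟩ := hmem
  rw [hba] at hm₂'
  obtain ⟨hq, hm₂⟩ := hm₂'
  -- left segment pull with boundary loss
  obtain ⟨l₁₀, gL, hm₁₀, hfst₁, hgL0, hgL2, hgLs, hgL1⟩ :
      ∃ (l₀ : List (ℕ × ℤ)) (g : ℤ), ChainMem J b l₀ ∧ l₀.map Prod.fst = l₁.map Prod.fst ∧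
        0 ≤ g ∧ g ≤ 1 ∧ lsum l₀ - g ≤ lsum l₁ ∧ (¬((k:ℤ) ≤ lastL 0 l₁) → g = 0) := by
    rcases List.eq_nil_or_concat l₁ with h | ⟨l₁', qL, h⟩
    · subst h
      exact ⟨[], 0, trivial, rfl, le_refl _, by norm_num, by simp [lsum], fun _ => rfl⟩
    · rw [List.concat_eq_append] at h
      subst h
      rw [chainMem_append] at hm₁
      obtain ⟨hm₁', hqL, -⟩ := hm₁
      have hcomp : (b + l₁'.length) + 1 = a := by
        simp only [List.length_append, List.length_cons, List.length_nil] at hba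
        omega
      rw [hadj _ (Or.inr hcomp) _] at hqL
      obtain ⟨y, hy, hye⟩ := Multiset.mem_map.1 hqL
      have hout : ∀ t, t < l₁'.length →
          (¬(b + t = a) ∧ ¬(a + 1 = b + t ∨ b + t + 1 = a)) := by
        intro t ht; omega
      obtain ⟨l₀', h1, h2, h3⟩ := chain_pull J J' _ hpull l₁' b hout hm₁'
      refine ⟨l₀' ++ [(qL.1, y)], if k ≤ qL.1 then (1:ℤ) else 0, ?_, by simp [h2],
        by split <;> norm_num, by split <;> norm_num, ?_, ?_⟩
      · rw [chainMem_append]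
        refine ⟨h1, ?_⟩
        rw [length_eq_of_fst_eq h2]
        exact ⟨hy, trivial⟩
      · rw [lsum_append, lsum_append]
        simp only [lsum]
        by_cases hkq : k ≤ qL.1
        · rw [if_pos hkq]; rw [if_pos hkq] at hye; omega
        · rw [if_neg hkq]; rw [if_neg hkq] at hye; omega
      · intro hk
        rw [lastL_concat] at hk
        rw [if_neg (fun h => hk (by exact_mod_cast h))]
  -- right segment pull with boundary loss
  obtain ⟨l₂₀, gR, hm₂₀, hfst₂, hgR0, hgR2, hgRs, hgR1⟩ :
      ∃ (l₀ : List (ℕ × ℤ)) (g : ℤ), ChainMem J (a+1) l₀ ∧ l₀.map Prod.fst = l₂.map Prod.fst ∧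
        0 ≤ g ∧ g ≤ 1 ∧ lsum l₀ - g ≤ lsum l₂ ∧ (¬((k:ℤ) ≤ headL l₂) → g = 0) := by
    cases l₂ with
    | nil =>
        exact ⟨[], 0, trivial, rfl, le_refl _, by norm_num, by simp [lsum], fun _ => rfl⟩
    | cons qh l₂' =>
        obtain ⟨hqh, hm₂''⟩ := hm₂
        rw [hadj _ (Or.inl rfl) _] at hqh
        obtain ⟨y, hy, hye⟩ := Multiset.mem_map.1 hqh
        have hout : ∀ t, t < l₂'.length →
            (¬(a + 1 + 1 + t = a) ∧ ¬(a + 1 = a + 1 + 1 + t ∨ a + 1 + 1 + t + 1 = a)) := by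
          intro t ht; omega
        obtain ⟨l₀', h1, h2, h3⟩ := chain_pull J J' _ hpull l₂' (a+1+1) hout hm₂''
        refine ⟨(qh.1, y) :: l₀', if k ≤ qh.1 then (1:ℤ) else 0, ⟨hy, h1⟩, by simp [h2],
          by split <;> norm_num, by split <;> norm_num, ?_, ?_⟩
        · simp only [lsum]
          by_cases hkq : k ≤ qh.1
          · rw [if_pos hkq]; rw [if_pos hkq] at hye; omega
          · rw [if_neg hkq]; rw [if_neg hkq] at hye; omega
        · intro hk
          simp only [headL] at hk
          rw [if_neg (fun h => hk (by exact_mod_cast h))]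
  have hlen₁₀ : l₁₀.length = l₁.length := length_eq_of_fst_eq hfst₁
  have mkchain : ∀ (m1 : ℕ) (mx : ℤ), mx ∈ J a m1 →
      -(cost 0 l₁ + (max ((m1:ℤ) - lastL 0 l₁) 0 + cost (m1:ℤ) l₂)) ≤
        lsum l₁₀ + (mx + lsum l₂₀) := by
    intro m1 mx hm
    have hcm : ChainMem J b (l₁₀ ++ (m1, mx) :: l₂₀) := by
      rw [chainMem_append]
      refine ⟨hm₁₀, ?_⟩
      have h4 : b + l₁₀.length = a := by omega
      rw [h4]
      exact ⟨hm, hm₂₀⟩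
    have h5 := hchain b _ hcm
    rw [cost_append, lsum_append] at h5
    simp only [cost, lsum] at h5
    rw [cost_congr l₁₀ l₁ 0 hfst₁, lastL_congr l₁₀ l₁ 0 hfst₁,
      cost_congr l₂₀ l₂ _ hfst₂] at h5
    exact h5
  rw [cost_append, lsum_append]
  simp only [cost, lsum]
  have goal_old_low : q.2 ∈ J a q.1 → q.1 < k →
      -(cost 0 l₁ + (max ((q.1:ℤ) - lastL 0 l₁) 0 + cost (q.1:ℤ) l₂)) ≤
        lsum l₁ + (q.2 + lsum l₂) := by
    intro hq' hqk
    by_cases hloss : ¬((k:ℤ) ≤ lastL 0 l₁) ∧ ¬((k:ℤ) ≤ headL l₂)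
    · -- no losses: plain
      have e1 := hgL1 hloss.1
      have e2 := hgR1 hloss.2
      have h6 := mkchain q.1 q.2 hq'
      omega
    · -- substitution route, using q.2 ≥ s + 1
      have hq2s : s + 1 ≤ q.2 := by
        rcases lt_or_ge q.2 0 with h | h
        · have h1 := hmin q.1 q.2 hq' h
          have h2 : q.2 ≠ s := fun he => hnotlt q.1 hqk (he ▸ hq')
          omega
        · omega
      have hsub := mkchain k s hsk
      rw [cost_eq ((k:ℤ)) l₂] at hsub
      rw [cost_eq ((q.1:ℤ)) l₂]
      by_cases hl2 : l₂ = []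
      · rw [if_pos hl2] at hsub ⊢
        have hgr0 : gR = 0 := hgR1 (by rw [hl2]; simp [headL]; omega)
        by_cases hgl : (k:ℤ) ≤ lastL 0 l₁
        · omega
        · have hB : (k:ℤ) ≤ headL l₂ := by tauto
          rw [hl2] at hB
          simp [headL] at hB
          omega
      · rw [if_neg hl2] at hsub ⊢
        by_cases hgl : (k:ℤ) ≤ lastL 0 l₁ <;> by_cases hgr : (k:ℤ) ≤ headL l₂
        · omega
        · have := hgR1 hgr; omega
        · have := hgL1 hgl; omega
        · have e1 := hgL1 hgl; have e2 := hgR1 hgr; omega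
  rcases lt_trichotomy q.1 k with hqk | hqk | hqk
  · -- q.1 < k
    by_cases hq1 : q.1 + 1 = k
    · rw [ha_km1 q.1 hq1] at hq
      by_cases hk1' : k = 1
      · rw [if_pos hk1'] at hq
        rw [add_zero] at hq
        exact goal_old_low hq hqk
      · rw [if_neg hk1'] at hq
        rcases Multiset.mem_add.1 hq with hq' | hq'
        · exact goal_old_low hq' hqk
        · -- new string (k-1, s+1)
          have hqs : q.2 = s + 1 := Multiset.mem_singleton.1 hq'
          have hsub := mkchain k s hsk
          rw [cost_eq ((k:ℤ)) l₂] at hsub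
          rw [cost_eq ((q.1:ℤ)) l₂]
          by_cases hl2 : l₂ = []
          · rw [if_pos hl2] at hsub ⊢
            have hgr0 : gR = 0 := hgR1 (by rw [hl2]; simp [headL]; omega)
            by_cases hgl : (k:ℤ) ≤ lastL 0 l₁
            · omega
            · have := hgL1 hgl; omega
          · rw [if_neg hl2] at hsub ⊢
            by_cases hgl : (k:ℤ) ≤ lastL 0 l₁ <;> by_cases hgr : (k:ℤ) ≤ headL l₂
            · omega
            · have := hgR1 hgr; omega
            · have := hgL1 hgl; omega
            · have e1 := hgL1 hgl; have e2 := hgR1 hgr; omega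
    · rw [ha_lt q.1 (by omega)] at hq
      exact goal_old_low hq hqk
  · -- q.1 = k
    rw [hqk] at hq ⊢
    rw [ha_k] at hq
    obtain ⟨y, hy, hye⟩ := Multiset.mem_map.1 hq
    have h6 := mkchain k y (Multiset.mem_of_mem_erase hy)
    omega
  · -- k < q.1
    rw [ha_gt q.1 hqk] at hq
    obtain ⟨y, hy, hye⟩ := Multiset.mem_map.1 hq
    have h6 := mkchain q.1 y hy
    omega

theorem hw_inv {L : ℕ → ℕ → ℕ} {n : ℕ} {J : RCdata} (hHW : HW L J) (hS : Supp n J) :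
    Inv J := by
  refine ⟨hS.2.1, ?_⟩
  intro b l hm
  have h1 : 0 ≤ lsum l := by
    induction l generalizing b with
    | nil => exact le_refl 0
    | cons q l ih =>
        obtain ⟨hq, hm'⟩ := hm
        have := hHW.2 b q.1 q.2 hq
        have := ih (b + 1) hm'
        show 0 ≤ q.2 + lsum l
        omega
  have h2 := cost_nonneg l 0
  omega

end RCAux


/-- every string `(i,x)` of any unrestricted rigged configuration in
`RC(L)` (the crystal generated from highest weight rigged configurations by the
operators `e_a`, `f_a`) satisfies `x ≥ −i`. -/
theorem label_lower_bound_on_RC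
    (n : ℕ) (hn : 2 ≤ n) (L : ℕ → ℕ → ℕ)
    (hL : ∃ B, ∀ b i, B < i → L b i = 0)
    (J : RCdata) (hGen : Gen n L J) :
    ∀ b i x, x ∈ J b i → -(i : ℤ) ≤ x := by
  obtain ⟨J0, hHW, hSupp, hpath⟩ := hGen
  have hInv : RCAux.Inv J := by
    clear hn hL
    induction hpath with
    | refl => exact RCAux.hw_inv hHW hSupp
    | tail hcd hstep ih =>
        obtain ⟨a, -, -, hFE⟩ := hstep
        rcases hFE with ⟨s', k', hF⟩ | ⟨s', k', hEe⟩
        · exact RCAux.fstep_inv hF ih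
        · exact RCAux.estep_inv hEe ih
  intro b i x hx
  have h := hInv.2 b [(i, x)] ⟨hx, trivial⟩
  simp [RCAux.lsum, RCAux.cost] at h
  omega
end

section
/- Let (ν,J) be an unrestricted rigged configuration and fix a. If all labels x of strings (i,x) in (ν,J)^{(a)} satisfy x ≥ s for some s, and (k, s) is a string such that every string of length > k has label > s, then p_i^{(a)} ≥ s + 1 for all i > k (assuming the convexity property 2p_i^{(a)} ≥ p_{i−1}^{(a)} + p_{i+1}^{(a)} whenever m_i^{(a)} = 0, that labels never exceed vacancy numbers, and that the large-i vacancy number p satisfies p > s). -/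
/-- the key convexity step.  Let `(ν,J)^{(a)}` be a rigged partition with
labels `J i` (a multiset for each string length `i`, so `m_i^{(a)} = (J i).card`) and
vacancy numbers `p i`.  Assume all labels are `≥ s`, `(k,s)` is a string such that every
string of length `> k` has label `> s`, labels never exceed the vacancy numbers, the
convexity property `2 p_i ≥ p_{i-1} + p_{i+1}` holds whenever `m_i = 0`, `p` is eventually
constant equal to `pL` (and `ν^{(a)}` has no parts beyond `N`), and `pL > s`.  Then
`p_i ≥ s + 1` for all `i > k`. -/
theorem vacancy_gt_s_above_k
    (p : ℕ → ℤ) (J : ℕ → Multiset ℤ) (s pL : ℤ) (k N : ℕ)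
    (hk : 1 ≤ k) (hsk : s ∈ J k)
    (hmin : ∀ i x, x ∈ J i → s ≤ x)
    (hgt : ∀ i x, k < i → x ∈ J i → s < x)
    (hval : ∀ i x, x ∈ J i → x ≤ p i)
    (hconv : ∀ i, 1 ≤ i → J i = 0 → p (i - 1) + p (i + 1) ≤ 2 * p i)
    (hN : ∀ i, N ≤ i → p i = pL ∧ J i = 0)
    (hpL : s < pL) :
    ∀ i, k < i → s + 1 ≤ p i := by
  have hpk : s ≤ p k := hval k s hsk
  have hJ0 : ∀ i, k < i → p i ≤ s → J i = 0 := by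
    intro i hi hpi
    by_contra h
    obtain ⟨x, hx⟩ := Multiset.exists_mem_of_ne_zero h
    have h1 := hgt i x hi hx
    have h2 := hval i x hx
    linarith
  have G : ∀ i, k < i → p i ≤ s → p (i + 1) ≤ p i := by
    intro i
    induction i using Nat.strong_induction_on with
    | _ i IH =>
      intro hi hpi
      have hprev : p i ≤ p (i - 1) := by
        rcases Nat.lt_or_ge k (i - 1) with h | h
        · rcases le_or_gt (p (i - 1)) s with h2 | h2
          · have h3 := IH (i - 1) (by omega) h h2
            rw [show i - 1 + 1 = i from by omega] at h3
            linarith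
          · linarith
        · rw [show i - 1 = k from by omega]; linarith
      have hc := hconv i (by omega) (hJ0 i hi hpi)
      linarith
  intro i hi
  by_contra hcon
  push_neg at hcon
  have hpi : p i ≤ s := by linarith
  have chain : ∀ j, p (i + j) ≤ s := by
    intro j
    induction j with
    | zero => simpa using hpi
    | succ j ihj =>
      have h := G (i + j) (by omega) ihj
      rw [show i + (j + 1) = (i + j) + 1 from by omega]
      linarith
  have h1 := (hN (i + N) (by omega)).1
  have h2 := chain N
  linarith
end
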